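/- arXiv:2112.02935 — 13 statements merged into one kernel-verified Lean document; each statement's English description precedes it below -/
import Mathlib

section
/- Let a group G act on a nonempty set X. Then the action admits a paradoxical decomposition if and only if it is not amenable (Tarski alternative for group actions). -/
open scoped Pointwise ENNReal

section Defs

variable (G X : Type*) [Group G] [MulAction G X]

/-- The action of `G` on `X` admits a paradoxical decomposition with `p + q` pieces:
pairwise disjoint subsets `A 1, ..., A p, B 1, ..., B q` of `X` and group elements
`g i`, `h j` such that `X = ⋃ g i • A i = ⋃ h j • B j`. -/
def IsParadoxicalWith (p q : ℕ) : Prop :=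
  ∃ (A : Fin p → Set X) (B : Fin q → Set X) (g : Fin p → G) (h : Fin q → G),
    (∀ i j, i ≠ j → Disjoint (A i) (A j)) ∧
    (∀ i j, i ≠ j → Disjoint (B i) (B j)) ∧
    (∀ i j, Disjoint (A i) (B j)) ∧
    (⋃ i, g i • A i) = Set.univ ∧ (⋃ j, h j • B j) = Set.univ

/-- The action admits a paradoxical decomposition. -/
def IsParadoxical : Prop := ∃ p q : ℕ, IsParadoxicalWith G X p q

/-- The Tarski number of the action: the least total number of pieces in a
paradoxical decomposition, or `⊤` if there is none. -/
noncomputable def tarskiNumber : ℕ∞ :=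
  sInf {k : ℕ∞ | ∃ p q : ℕ, IsParadoxicalWith G X p q ∧ k = (p : ℕ∞) + (q : ℕ∞)}

/-- The action `G ↷ X` is amenable: there is a finitely additive, `G`-invariant
measure `μ : P(X) → [0, ∞]` with `μ X = 1`. -/
def ActionAmenable : Prop :=
  ∃ μ : Set X → ℝ≥0∞,
    μ Set.univ = 1 ∧
    (∀ A B : Set X, Disjoint A B → μ (A ∪ B) = μ A + μ B) ∧
    ∀ (g : G) (A : Set X), μ (g • A) = μ A

end Defs

section Config

variable {G X : Type*} [Group G] [MulAction G X]

/-- `E` is a (finite, indexed) partition of `X`. -/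
def IsPartition {m : ℕ} (E : Fin m → Set X) : Prop :=
  (∀ i j, i ≠ j → Disjoint (E i) (E j)) ∧ (⋃ i, E i) = Set.univ

/-- `x₀(C) = E (C 0) ∩ ⋂ i, (g i)⁻¹ • E (C (i + 1))`. -/
def xZero {n m : ℕ} (g : Fin n → G) (E : Fin m → Set X)
    (C : Fin (n + 1) → Fin m) : Set X :=
  E (C 0) ∩ ⋂ i : Fin n, (g i)⁻¹ • E (C i.succ)

/-- The configuration set of the pair `(g, E)`: tuples `C = (C 0, ..., C n)` such that
some `x ∈ E (C 0)` satisfies `g i • x ∈ E (C (i+1))` for all `i`,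
i.e. `x₀(C) ≠ ∅`. -/
def ConSet {n m : ℕ} (g : Fin n → G) (E : Fin m → Set X) :
    Set (Fin (n + 1) → Fin m) :=
  {C | (xZero g E C).Nonempty}

/-- `x_j(C)`: equals `x₀(C)` for `j = 0` and `g j • x₀(C)` for `1 ≤ j ≤ n`. -/
def xJ {n m : ℕ} (g : Fin n → G) (E : Fin m → Set X)
    (j : Fin (n + 1)) (C : Fin (n + 1) → Fin m) : Set X :=
  Fin.cases (xZero g E C) (fun i => g i • xZero g E C) j

/-- `f` is a normalized solution of the system of configuration equations
`Eq(g, E; X)`: it is nonnegative, supported on configurations, sums to `1`,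
and satisfies `∑ {f C : C j = i} = ∑ {f C : C 0 = i}` for all `j, i`. -/
def IsNormalizedSolution {n m : ℕ} (g : Fin n → G) (E : Fin m → Set X)
    (f : (Fin (n + 1) → Fin m) → ℝ) : Prop :=
  (∀ C, 0 ≤ f C) ∧ (∀ C, C ∉ ConSet g E → f C = 0) ∧ (∑ C, f C) = 1 ∧
  ∀ (j : Fin n) (i : Fin m),
    (∑ C ∈ Finset.univ.filter fun C => C j.succ = i, f C) =
      ∑ C ∈ Finset.univ.filter fun C => C 0 = i, f C

/-- The system of configuration equations `Eq(g, E; X)` admits a normalized solution. -/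
def HasNormalizedSolution {n m : ℕ} (g : Fin n → G) (E : Fin m → Set X) : Prop :=
  ∃ f, IsNormalizedSolution g E f

end Config

/-- `Con(G ↷ X)`: the collection of all configuration sets of the action, recorded
together with the sizes `n` (of the tuple) and `m` (of the partition). -/
def ConCollection (G X : Type*) [Group G] [MulAction G X] :
    Set ((n : ℕ) × (m : ℕ) × Set (Fin (n + 1) → Fin m)) :=
  {S | ∃ (g : Fin S.1 → G) (E : Fin S.2.1 → Set X),
      IsPartition E ∧ S.2.2 = ConSet g E}

section AuxTarski

open Set Filter

variable {G X : Type*} [Group G] [MulAction G X]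

namespace TarskiProof

/-! ### Easy direction: paradoxical implies not amenable -/

theorem meas_mono {μ : Set X → ℝ≥0∞}
    (hadd : ∀ A B : Set X, Disjoint A B → μ (A ∪ B) = μ A + μ B)
    {A B : Set X} (h : A ⊆ B) : μ A ≤ μ B := by
  have h1 := hadd A (B \ A) disjoint_sdiff_self_right
  rw [Set.union_diff_cancel h] at h1
  rw [h1]; exact le_self_add

theorem meas_union_le {μ : Set X → ℝ≥0∞}
    (hadd : ∀ A B : Set X, Disjoint A B → μ (A ∪ B) = μ A + μ B)
    (A B : Set X) : μ (A ∪ B) ≤ μ A + μ B := by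
  have h1 := hadd A (B \ A) disjoint_sdiff_self_right
  rw [Set.union_diff_self] at h1
  rw [h1]
  exact add_le_add le_rfl (meas_mono hadd Set.diff_subset)

theorem meas_iUnion_le {μ : Set X → ℝ≥0∞}
    (hadd : ∀ A B : Set X, Disjoint A B → μ (A ∪ B) = μ A + μ B)
    (h0 : μ ∅ = 0) :
    ∀ {n : ℕ} (A : Fin n → Set X), μ (⋃ i, A i) ≤ ∑ i, μ (A i) := by
  intro n
  induction n with
  | zero => intro A; simp [h0]
  | succ n ih =>
    intro A
    have hU : (⋃ i, A i) = A 0 ∪ ⋃ i : Fin n, A i.succ := by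
      ext x; simp [Fin.exists_fin_succ]
    rw [hU, Fin.sum_univ_succ]
    exact (meas_union_le hadd _ _).trans (add_le_add le_rfl (ih _))

theorem sum_le_meas_iUnion {μ : Set X → ℝ≥0∞}
    (hadd : ∀ A B : Set X, Disjoint A B → μ (A ∪ B) = μ A + μ B) :
    ∀ {n : ℕ} (A : Fin n → Set X),
      (∀ i j, i ≠ j → Disjoint (A i) (A j)) → ∑ i, μ (A i) ≤ μ (⋃ i, A i) := by
  intro n
  induction n with
  | zero => intro A _; simp
  | succ n ih =>
    intro A hdisj
    have hU : (⋃ i, A i) = A 0 ∪ ⋃ i : Fin n, A i.succ := by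
      ext x; simp [Fin.exists_fin_succ]
    have hd : Disjoint (A 0) (⋃ i : Fin n, A i.succ) :=
      Set.disjoint_iUnion_right.2 fun i => hdisj 0 i.succ (Fin.succ_ne_zero i).symm
    rw [hU, Fin.sum_univ_succ, hadd _ _ hd]
    exact add_le_add le_rfl
      (ih _ fun i j hij => hdisj i.succ j.succ fun h => hij (Fin.succ_injective _ h))

theorem not_amenable_of_paradoxical (h : IsParadoxical G X) : ¬ ActionAmenable G X := by
  rintro ⟨μ, huniv, hadd, hinv⟩
  obtain ⟨p, q, A, B, g, k, hA, hB, hAB, hcA, hcB⟩ := h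
  have h0 : μ ∅ = 0 := by
    have h1 := hadd ∅ Set.univ disjoint_bot_left
    rw [Set.empty_union, huniv] at h1
    have h2 : μ ∅ + 1 = 0 + 1 := by rw [zero_add, ← h1]
    exact WithTop.add_right_cancel (by exact ENNReal.one_ne_top) h2
  have hA1 : (1:ℝ≥0∞) ≤ ∑ i, μ (A i) := by
    have h2 := meas_iUnion_le hadd h0 fun i => g i • A i
    rw [hcA, huniv] at h2
    calc (1:ℝ≥0∞) ≤ ∑ i, μ (g i • A i) := h2
    _ = ∑ i, μ (A i) := by simp [hinv]
  have hB1 : (1:ℝ≥0∞) ≤ ∑ j, μ (B j) := by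
    have h2 := meas_iUnion_le hadd h0 fun j => k j • B j
    rw [hcB, huniv] at h2
    calc (1:ℝ≥0∞) ≤ ∑ j, μ (k j • B j) := h2
    _ = ∑ j, μ (B j) := by simp [hinv]
  have hd : Disjoint (⋃ i, A i) (⋃ j, B j) :=
    Set.disjoint_iUnion_left.2 fun i => Set.disjoint_iUnion_right.2 fun j => hAB i j
  have hsum : ∑ i, μ (A i) + ∑ j, μ (B j) ≤ 1 := by
    calc ∑ i, μ (A i) + ∑ j, μ (B j)
        ≤ μ (⋃ i, A i) + μ (⋃ j, B j) :=
          add_le_add (sum_le_meas_iUnion hadd _ hA) (sum_le_meas_iUnion hadd _ hB)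
      _ = μ ((⋃ i, A i) ∪ ⋃ j, B j) := (hadd _ _ hd).symm
      _ ≤ μ Set.univ := meas_mono hadd (Set.subset_univ _)
      _ = 1 := huniv
  have hcontra : (1:ℝ≥0∞) + 1 ≤ 1 := le_trans (add_le_add hA1 hB1) hsum
  rw [one_add_one_eq_two] at hcontra
  exact ENNReal.one_lt_two.not_ge hcontra



theorem paradoxical_of_inj (S : Finset G) (f : X × Bool → X)
    (hinj : Function.Injective f) (hf : ∀ p : X × Bool, ∃ s ∈ S, s • p.1 = f p) :
    IsParadoxical G X := by
  classical
  have hex : ∀ (x : X) (b : Bool),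
      ∃ i : Fin S.card, ((S.equivFin.symm i : S) : G) • x = f (x, b) := by
    intro x b
    obtain ⟨s, hs, hsx⟩ := hf (x, b)
    refine ⟨S.equivFin ⟨s, hs⟩, ?_⟩
    rw [Equiv.symm_apply_apply]
    exact hsx
  choose c hc using hex
  set σ : Fin S.card → G := fun i => ((S.equivFin.symm i : S) : G) with hσ
  refine ⟨S.card, S.card, fun i => σ i • {x | c x false = i},
    fun i => σ i • {x | c x true = i}, fun i => (σ i)⁻¹, fun i => (σ i)⁻¹,
    ?_, ?_, ?_, ?_, ?_⟩
  · intro i j hij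
    rw [Set.disjoint_left]
    rintro y hyi hyj
    rw [Set.mem_smul_set] at hyi hyj
    obtain ⟨x, hx, rfl⟩ := hyi
    obtain ⟨x', hx', hxy⟩ := hyj
    rw [Set.mem_setOf_eq] at hx hx'
    have e1 : σ i • x = f (x, false) := by rw [← hx]; exact hc x false
    have e2 : σ j • x' = f (x', false) := by rw [← hx']; exact hc x' false
    have e3 : (x, false) = (x', false) := hinj (by rw [← e1, ← e2, hxy])
    have e4 : x = x' := (Prod.mk.injEq _ _ _ _ ▸ e3).1
    exact hij (by rw [← hx, ← hx', e4])
  · intro i j hij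
    rw [Set.disjoint_left]
    rintro y hyi hyj
    rw [Set.mem_smul_set] at hyi hyj
    obtain ⟨x, hx, rfl⟩ := hyi
    obtain ⟨x', hx', hxy⟩ := hyj
    rw [Set.mem_setOf_eq] at hx hx'
    have e1 : σ i • x = f (x, true) := by rw [← hx]; exact hc x true
    have e2 : σ j • x' = f (x', true) := by rw [← hx']; exact hc x' true
    have e3 : (x, true) = (x', true) := hinj (by rw [← e1, ← e2, hxy])
    have e4 : x = x' := (Prod.mk.injEq _ _ _ _ ▸ e3).1
    exact hij (by rw [← hx, ← hx', e4])
  · intro i j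
    rw [Set.disjoint_left]
    rintro y hyi hyj
    rw [Set.mem_smul_set] at hyi hyj
    obtain ⟨x, hx, rfl⟩ := hyi
    obtain ⟨x', hx', hxy⟩ := hyj
    rw [Set.mem_setOf_eq] at hx hx'
    have e1 : σ i • x = f (x, false) := by rw [← hx]; exact hc x false
    have e2 : σ j • x' = f (x', true) := by rw [← hx']; exact hc x' true
    have e3 : (x, false) = (x', true) := hinj (by rw [← e1, ← e2, hxy])
    simp at e3
  · ext y
    simp only [Set.mem_iUnion, inv_smul_smul, Set.mem_setOf_eq, Set.mem_univ, iff_true]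
    exact ⟨c y false, rfl⟩
  · ext y
    simp only [Set.mem_iUnion, inv_smul_smul, Set.mem_setOf_eq, Set.mem_univ, iff_true]
    exact ⟨c y true, rfl⟩

theorem paradoxical_of_doubling [DecidableEq X] (S : Finset G)
    (hS : ∀ E : Finset X, 2 * E.card ≤ (S • E).card) : IsParadoxical G X := by
  classical
  have hall : ∀ s : Finset (X × Bool),
      s.card ≤ (s.biUnion fun p => S • ({p.1} : Finset X)).card := by
    intro s
    have h1 : s.biUnion (fun p => S • ({p.1} : Finset X)) = S • s.image Prod.fst := by
      ext y
      simp only [Finset.mem_biUnion, Finset.mem_smul, Finset.mem_singleton,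
        Finset.mem_image]
      constructor
      · rintro ⟨p, hp, g, hg, x, rfl, rfl⟩
        exact ⟨g, hg, p.1, ⟨p, hp, rfl⟩, rfl⟩
      · rintro ⟨g, hg, x, ⟨p, hp, rfl⟩, rfl⟩
        exact ⟨p, hp, g, hg, p.1, rfl, rfl⟩
    have h2 : s ⊆ (s.image Prod.fst) ×ˢ (Finset.univ : Finset Bool) := by
      intro p hp
      rw [Finset.mem_product]
      exact ⟨Finset.mem_image.2 ⟨p, hp, rfl⟩, Finset.mem_univ _⟩
    calc s.card ≤ ((s.image Prod.fst) ×ˢ (Finset.univ : Finset Bool)).card :=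
          Finset.card_le_card h2
      _ = 2 * (s.image Prod.fst).card := by
          rw [Finset.card_product]
          simp [mul_comm]
      _ ≤ (S • s.image Prod.fst).card := hS _
      _ = _ := by rw [h1]
  obtain ⟨f, hfinj, hfmem⟩ :=
    (Finset.all_card_le_biUnion_card_iff_exists_injective _).1 hall
  apply paradoxical_of_inj S f hfinj
  intro p
  have hm := hfmem p
  rw [Finset.mem_smul] at hm
  obtain ⟨g, hg, x, hx, hgx⟩ := hm
  rw [Finset.mem_singleton] at hx
  subst hx
  exact ⟨g, hg, hgx⟩

theorem two_mul_pow_le (m : ℕ) (hm : 1 ≤ m) : 2 * m ^ m ≤ (m + 1) ^ m := by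
  have hm0 : ((m:ℚ)) ≠ 0 := by
    have : (0:ℚ) < m := by exact_mod_cast hm
    exact this.ne'
  have h1 : (2:ℚ) ≤ (1 + 1/(m:ℚ)) ^ m := by
    have h := one_add_mul_le_pow (a := (1/(m:ℚ))) (le_trans (by norm_num) (by positivity : (0:ℚ) ≤ 1/(m:ℚ))) m
    rw [mul_one_div, div_self hm0] at h
    linarith
  have h2 : ((m:ℚ) + 1) ^ m = (1 + 1/(m:ℚ))^m * (m:ℚ)^m := by
    rw [← mul_pow]
    congr 1
    field_simp
  have h3 : (2:ℚ) * (m:ℚ)^m ≤ ((m:ℚ)+1)^m := by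
    rw [h2]
    have hp : (0:ℚ) < (m:ℚ)^m := by positivity
    nlinarith
  exact_mod_cast h3

theorem exists_folner [DecidableEq G] [DecidableEq X]
    (hmain : ∀ S : Finset G, ∃ E : Finset X, (S • E).card < 2 * E.card)
    (S : Finset G) (h1S : (1:G) ∈ S) (n : ℕ) :
    ∃ F : Finset X, F.Nonempty ∧ (n + 1) * (S • F).card ≤ (n + 2) * F.card := by
  classical
  set m := n + 1 with hm
  obtain ⟨E, hE⟩ := hmain (S ^ m)
  set c : ℕ → ℕ := fun j => ((S ^ j) • E).card with hc
  have hc0 : c 0 = E.card := by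
    simp only [hc, pow_zero, one_smul]
  have hcm : c m < 2 * c 0 := by rw [hc0]; exact hE
  have key : ∃ j < m, m * c (j + 1) ≤ (m + 1) * c j := by
    by_contra hcon
    push_neg at hcon
    have hind : ∀ j ≤ m, (m + 1) ^ j * c 0 ≤ m ^ j * c j := by
      intro j hj
      induction j with
      | zero => simp
      | succ k ih =>
        have h3 := hcon k (by omega)
        calc (m+1)^(k+1) * c 0 = (m+1) * ((m+1)^k * c 0) := by ring
          _ ≤ (m+1) * (m^k * c k) := Nat.mul_le_mul_left _ (ih (by omega))
          _ = m^k * ((m+1) * c k) := by ring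
          _ ≤ m^k * (m * c (k+1)) := Nat.mul_le_mul_left _ (le_of_lt h3)
          _ = m^(k+1) * c (k+1) := by ring
    have h4 := hind m le_rfl
    have h5 := two_mul_pow_le m (by omega)
    have h6 : m ^ m * (2 * c 0) ≤ m ^ m * c m := by
      calc m^m * (2*c 0) = (2 * m^m) * c 0 := by ring
        _ ≤ (m+1)^m * c 0 := Nat.mul_le_mul_right _ h5
        _ ≤ m^m * c m := h4
    have h7 : 2 * c 0 ≤ c m := Nat.le_of_mul_le_mul_left h6 (by positivity)
    omega
  obtain ⟨j, hj, hkey⟩ := key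
  refine ⟨(S ^ j) • E, ?_, ?_⟩
  · have hEne : E.Nonempty := by
      rw [Finset.nonempty_iff_ne_empty]
      rintro rfl
      simp at hE
    have hSj : (S ^ j).Nonempty := ⟨1, Finset.one_mem_pow h1S⟩
    exact hSj.smul hEne
  · have hps : S • ((S ^ j) • E) = (S ^ (j+1)) • E := by
      rw [← mul_smul, ← pow_succ']
    rw [hps]
    exact hkey

noncomputable def fr (F : Finset X) (A : Set X) : ℝ :=
  ((F : Set X) ∩ A).ncard / F.card

theorem fr_nonneg (F : Finset X) (A : Set X) : 0 ≤ fr F A :=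
  div_nonneg (Nat.cast_nonneg _) (Nat.cast_nonneg _)

theorem fr_le_one (F : Finset X) (A : Set X) : fr F A ≤ 1 := by
  apply div_le_one_of_le₀
  · have h1 : ((F : Set X) ∩ A).ncard ≤ (F : Set X).ncard :=
      Set.ncard_le_ncard Set.inter_subset_left F.finite_toSet
    rw [Set.ncard_coe_finset] at h1
    exact_mod_cast h1
  · exact Nat.cast_nonneg _

theorem fr_univ {F : Finset X} (h : F.Nonempty) : fr F Set.univ = 1 := by
  rw [fr, Set.inter_univ, Set.ncard_coe_finset]
  exact div_self (Nat.cast_ne_zero.2 (Finset.card_pos.2 h).ne')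

theorem fr_union (F : Finset X) {A B : Set X} (h : Disjoint A B) :
    fr F (A ∪ B) = fr F A + fr F B := by
  rw [fr, fr, fr, Set.inter_union_distrib_left,
    Set.ncard_union_eq (h.mono Set.inter_subset_right Set.inter_subset_right)
      (F.finite_toSet.inter_of_left _) (F.finite_toSet.inter_of_left _),
    Nat.cast_add, add_div]

theorem ncard_le_aux {F T : Finset X} (hFT : F ⊆ T) (h : G)
    (hsm : ∀ x ∈ F, h • x ∈ T) (A : Set X) :
    ((F : Set X) ∩ A).ncard ≤ ((F : Set X) ∩ h • A).ncard + (T.card - F.card) := by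
  classical
  have h1 : (fun x => h • x) '' ((F : Set X) ∩ A)
      ⊆ ((F : Set X) ∩ h • A) ∪ ((T : Set X) \ (F : Set X)) := by
    rintro y ⟨x, ⟨hxF, hxA⟩, rfl⟩
    by_cases hy : h • x ∈ (F : Set X)
    · exact Or.inl ⟨hy, Set.smul_mem_smul_set hxA⟩
    · exact Or.inr ⟨hsm x hxF, hy⟩
  have h2 : ((F : Set X) ∩ A).ncard = ((fun x => h • x) '' ((F : Set X) ∩ A)).ncard :=
    (Set.ncard_image_of_injective _ (MulAction.injective h)).symm
  have hfin1 : (((F : Set X) ∩ h • A) ∪ ((T : Set X) \ (F : Set X))).Finite :=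
    (F.finite_toSet.inter_of_left _).union (T.finite_toSet.diff)
  calc ((F : Set X) ∩ A).ncard
      = ((fun x => h • x) '' ((F : Set X) ∩ A)).ncard := h2
    _ ≤ (((F : Set X) ∩ h • A) ∪ ((T : Set X) \ (F : Set X))).ncard :=
        Set.ncard_le_ncard h1 hfin1
    _ ≤ ((F : Set X) ∩ h • A).ncard + ((T : Set X) \ (F : Set X)).ncard :=
        Set.ncard_union_le _ _
    _ = ((F : Set X) ∩ h • A).ncard + (T.card - F.card) := by
        rw [← Finset.coe_sdiff, Set.ncard_coe_finset, Finset.card_sdiff_of_subset hFT]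

theorem fr_smul_bound [DecidableEq G] [DecidableEq X] {S : Finset G} {F : Finset X}
    {n : ℕ} (hFne : F.Nonempty)
    (hcard : (n + 1) * ((insert (1:G) S) • F).card ≤ (n + 2) * F.card)
    {g : G} (hg : g ∈ S) (hg' : g⁻¹ ∈ S) (A : Set X) :
    |fr F (g • A) - fr F A| ≤ 1 / ((n : ℝ) + 1) := by
  set S' := insert (1:G) S with hS'
  set T := S' • F with hT
  have hFT : F ⊆ T := by
    intro x hx
    have h1 := Finset.smul_mem_smul (Finset.mem_insert_self 1 S) hx
    rwa [one_smul] at h1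
  have hsm : ∀ h : G, h ∈ S' → ∀ x ∈ F, h • x ∈ T := fun h hh x hx =>
    Finset.smul_mem_smul hh hx
  have hab : ((F : Set X) ∩ A).ncard ≤ ((F : Set X) ∩ g • A).ncard + (T.card - F.card) :=
    ncard_le_aux hFT g (hsm g (Finset.mem_insert_of_mem hg)) A
  have hba : ((F : Set X) ∩ g • A).ncard ≤ ((F : Set X) ∩ A).ncard + (T.card - F.card) := by
    have h1 := ncard_le_aux hFT g⁻¹ (hsm g⁻¹ (Finset.mem_insert_of_mem hg')) (g • A)
    rwa [inv_smul_smul] at h1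
  have hF0 : (0:ℝ) < F.card := by exact_mod_cast Finset.card_pos.2 hFne
  have hcle : F.card ≤ T.card := Finset.card_le_card hFT
  have hdel : ((T.card - F.card : ℕ) : ℝ) = (T.card : ℝ) - F.card := Nat.cast_sub hcle
  have hcard' : ((n:ℝ) + 1) * T.card ≤ ((n:ℝ) + 2) * F.card := by exact_mod_cast hcard
  have hδ : ((n:ℝ) + 1) * ((T.card : ℝ) - F.card) ≤ F.card := by nlinarith
  have habs : |fr F (g • A) - fr F A| ≤ ((T.card : ℝ) - F.card) / F.card := by
    have e1 : fr F (g • A) - fr F A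
        = ((((F : Set X) ∩ g • A).ncard : ℝ) - (((F : Set X) ∩ A).ncard : ℝ)) / F.card := by
      rw [fr, fr, div_sub_div_same]
    rw [e1, abs_div, abs_of_pos hF0, div_le_div_iff₀ hF0 hF0]
    have hab' : (((F : Set X) ∩ A).ncard : ℝ)
        ≤ (((F : Set X) ∩ g • A).ncard : ℝ) + ((T.card : ℝ) - F.card) := by
      rw [← hdel]; exact_mod_cast hab
    have hba' : (((F : Set X) ∩ g • A).ncard : ℝ)
        ≤ (((F : Set X) ∩ A).ncard : ℝ) + ((T.card : ℝ) - F.card) := by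
      rw [← hdel]; exact_mod_cast hba
    have habs2 : |(((F : Set X) ∩ g • A).ncard : ℝ) - (((F : Set X) ∩ A).ncard : ℝ)|
        ≤ (T.card : ℝ) - F.card := abs_sub_le_iff.2 ⟨by linarith, by linarith⟩
    nlinarith [abs_nonneg ((((F : Set X) ∩ g • A).ncard : ℝ) - (((F : Set X) ∩ A).ncard : ℝ))]
  refine habs.trans ?_
  rw [div_le_div_iff₀ hF0 (by positivity)]
  nlinarith

theorem amenable_of_folner [DecidableEq G] [DecidableEq X]
    (hfol : ∀ (S : Finset G) (n : ℕ), ∃ F : Finset X, F.Nonempty ∧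
      (n + 1) * ((insert (1:G) S) • F).card ≤ (n + 2) * F.card) :
    ActionAmenable G X := by
  classical
  choose F hFne hFcard using hfol
  obtain ⟨U, hU⟩ := Ultrafilter.exists_le (atTop : Filter (Finset G × ℕ))
  have hlim : ∀ A : Set X, ∃ r ∈ Set.Icc (0:ℝ) 1,
      Filter.Tendsto (fun i : Finset G × ℕ => fr (F i.1 i.2) A) (U : Filter _) (nhds r) := by
    intro A
    have hle : (U.map (fun i : Finset G × ℕ => fr (F i.1 i.2) A) : Filter ℝ)
        ≤ 𝓟 (Set.Icc (0:ℝ) 1) := by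
      rw [Ultrafilter.coe_map, Filter.le_principal_iff, Filter.mem_map]
      exact Filter.univ_mem' fun i => ⟨fr_nonneg _ _, fr_le_one _ _⟩
    obtain ⟨r, hr, hconv⟩ := isCompact_Icc.ultrafilter_le_nhds _ hle
    refine ⟨r, hr, ?_⟩
    rw [Ultrafilter.coe_map] at hconv
    exact hconv
  choose ν hν hνlim using hlim
  have hν1 : ν Set.univ = 1 := by
    have h1 : Filter.Tendsto (fun i : Finset G × ℕ => fr (F i.1 i.2) Set.univ)
        (U : Filter _) (nhds 1) := by
      have he : (fun i : Finset G × ℕ => fr (F i.1 i.2) Set.univ) = fun _ => 1 :=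
        funext fun i => fr_univ (hFne i.1 i.2)
      rw [he]
      exact tendsto_const_nhds
    exact tendsto_nhds_unique (hνlim _) h1
  have hνadd : ∀ A B : Set X, Disjoint A B → ν (A ∪ B) = ν A + ν B := by
    intro A B hAB
    have h1 : Filter.Tendsto (fun i : Finset G × ℕ => fr (F i.1 i.2) (A ∪ B))
        (U : Filter _) (nhds (ν A + ν B)) := by
      have h2 := (hνlim A).add (hνlim B)
      have h3 : (fun i : Finset G × ℕ => fr (F i.1 i.2) (A ∪ B))
          = fun i => fr (F i.1 i.2) A + fr (F i.1 i.2) B :=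
        funext fun i => fr_union _ hAB
      rw [h3]
      exact h2
    exact tendsto_nhds_unique (hνlim _) h1
  have hνinv : ∀ (g : G) (A : Set X), ν (g • A) = ν A := by
    intro g A
    have hdiff : Filter.Tendsto
        (fun i : Finset G × ℕ => fr (F i.1 i.2) (g • A) - fr (F i.1 i.2) A)
        (U : Filter _) (nhds 0) := by
      rw [Metric.tendsto_nhds]
      intro ε hε
      obtain ⟨n₀, hn₀⟩ := exists_nat_one_div_lt hε
      have hev : ∀ᶠ i in (atTop : Filter (Finset G × ℕ)),
          dist (fr (F i.1 i.2) (g • A) - fr (F i.1 i.2) A) 0 < ε := by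
        filter_upwards [Filter.eventually_ge_atTop (({g, g⁻¹} : Finset G), n₀)] with i hi
        have hsub : ({g, g⁻¹} : Finset G) ⊆ i.1 := hi.1
        have hb := fr_smul_bound (hFne i.1 i.2) (hFcard i.1 i.2)
          (hsub (by simp : g ∈ ({g, g⁻¹} : Finset G)))
          (hsub (by simp : g⁻¹ ∈ ({g, g⁻¹} : Finset G))) A
        rw [Real.dist_eq, sub_zero]
        refine lt_of_le_of_lt hb (lt_of_le_of_lt ?_ hn₀)
        apply one_div_le_one_div_of_le
        · positivity
        · have h4 : (n₀ : ℝ) ≤ i.2 := by exact_mod_cast hi.2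
          linarith
      exact hU hev
    have h1 : Filter.Tendsto (fun i : Finset G × ℕ => fr (F i.1 i.2) (g • A))
        (U : Filter _) (nhds (ν A + 0)) := by
      have h2 := (hνlim A).add hdiff
      have h3 : (fun i : Finset G × ℕ =>
          fr (F i.1 i.2) A + (fr (F i.1 i.2) (g • A) - fr (F i.1 i.2) A))
          = fun i => fr (F i.1 i.2) (g • A) := funext fun i => by ring
      rwa [h3] at h2
    rw [add_zero] at h1
    exact tendsto_nhds_unique (hνlim _) h1
  refine ⟨fun A => ENNReal.ofReal (ν A), ?_, ?_, ?_⟩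
  · dsimp only
    rw [hν1]
    simp
  · intro A B h
    dsimp only
    rw [hνadd A B h, ENNReal.ofReal_add (hν A).1 (hν B).1]
  · intro g A
    dsimp only
    rw [hνinv]

end TarskiProof
end AuxTarski

/-- Tarski alternative for group actions: the action of `G` on a nonempty set `X`
admits a paradoxical decomposition iff it is not amenable. -/
theorem stmt0 (G X : Type*) [Group G] [MulAction G X] [Nonempty X] :
    IsParadoxical G X ↔ ¬ ActionAmenable G X := by
  classical
  constructor
  · exact TarskiProof.not_amenable_of_paradoxical
  · intro hna
    by_contra hpar
    apply hna
    have hmain : ∀ S : Finset G, ∃ E : Finset X, (S • E).card < 2 * E.card := by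
      intro S
      by_contra hc
      push_neg at hc
      exact hpar (TarskiProof.paradoxical_of_doubling S hc)
    exact TarskiProof.amenable_of_folner fun S n =>
      TarskiProof.exists_folner hmain (insert 1 S) (Finset.mem_insert_self 1 S) n
end

section
/- If a group G acts on a set X and the action is amenable, then for every finite ordered tuple 𝔤 = (g_1,...,g_n) of elements of G and every finite partition 𝓔 = {E_1,...,E_m} of X, the system of configuration equations Eq(𝔤,𝓔;X) has a normalized solution. -/
open scoped Pointwise ENNReal

/-- Finite additivity over a finset, from binary additivity. -/
lemma finAdd {X : Type*} (μ : Set X → ℝ≥0∞) (h0 : μ ∅ = 0)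
    (hadd : ∀ A B : Set X, Disjoint A B → μ (A ∪ B) = μ A + μ B)
    {ι : Type*} [DecidableEq ι] (s : Finset ι) (A : ι → Set X)
    (hdisj : ∀ a ∈ s, ∀ b ∈ s, a ≠ b → Disjoint (A a) (A b)) :
    μ (⋃ a ∈ s, A a) = ∑ a ∈ s, μ (A a) := by
  induction s using Finset.induction with
  | empty => simpa
  | @insert a s ha ih =>
    rw [Finset.set_biUnion_insert, Finset.sum_insert ha,
      hadd _ _ ?_, ih ?_]
    · intro x hx y hy hxy
      exact hdisj x (Finset.mem_insert_of_mem hx) y (Finset.mem_insert_of_mem hy) hxy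
    · rw [Set.disjoint_iUnion₂_right]
      intro b hb
      exact hdisj a (Finset.mem_insert_self a s) b (Finset.mem_insert_of_mem hb)
        (fun h => ha (h ▸ hb))

/-- If the action `G ↷ X` is amenable, then every system of configuration equations
has a normalized solution. -/
theorem stmt1 {G X : Type*} [Group G] [MulAction G X]
    (ham : ActionAmenable G X) {n m : ℕ} (g : Fin n → G) (E : Fin m → Set X)
    (hE : IsPartition E) : HasNormalizedSolution g E := by
  classical
  obtain ⟨μ, hμ1, hadd, hinv⟩ := ham
  have h0 : μ ∅ = 0 := by
    have h := hadd Set.univ ∅ (by simp)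
    rw [Set.union_empty, hμ1] at h
    have h' : (1 : ℝ≥0∞) + 0 = 1 + μ ∅ := by simpa using h
    exact ((ENNReal.add_right_inj (by simp)).mp h').symm
  have hle : ∀ A : Set X, μ A ≤ 1 := by
    intro A
    have h := hadd A Aᶜ disjoint_compl_right
    rw [Set.union_compl_self, hμ1] at h
    exact h ▸ le_self_add
  have hne : ∀ A : Set X, μ A ≠ ⊤ := fun A => (lt_of_le_of_lt (hle A) (by simp)).ne
  -- membership facts
  have hex : ∀ y : X, ∃ i, y ∈ E i := by
    intro y
    have : y ∈ ⋃ i, E i := hE.2 ▸ Set.mem_univ y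
    simpa using this
  choose idx hidx using hex
  have huniq : ∀ (y : X) (i j : Fin m), y ∈ E i → y ∈ E j → i = j := by
    intro y i j hi hj
    by_contra hne'
    exact (hE.1 i j hne').le_bot ⟨hi, hj⟩
  -- membership in xZero
  have hmem : ∀ (C : Fin (n + 1) → Fin m) (x : X),
      x ∈ xZero g E C ↔ x ∈ E (C 0) ∧ ∀ i : Fin n, g i • x ∈ E (C i.succ) := by
    intro C x
    simp only [xZero, Set.mem_inter_iff, Set.mem_iInter, Set.mem_inv_smul_set_iff]
  -- covering
  have hcov : ∀ x : X, x ∈ xZero g E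
      (fun j => Fin.cases (idx x) (fun i => idx (g i • x)) j) := by
    intro x
    rw [hmem]
    exact ⟨hidx x, fun i => hidx (g i • x)⟩
  -- disjointness
  have hTdisj : ∀ C C' : Fin (n + 1) → Fin m, C ≠ C' →
      Disjoint (xZero g E C) (xZero g E C') := by
    intro C C' hne'
    rw [Set.disjoint_left]
    intro x hx hx'
    apply hne'
    funext j
    rw [hmem] at hx hx'
    induction j using Fin.cases with
    | zero => exact huniq x _ _ hx.1 hx'.1
    | succ i => exact huniq (g i • x) _ _ (hx.2 i) (hx'.2 i)
  -- the candidate solution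
  refine ⟨fun C => (μ (xZero g E C)).toReal, fun C => ENNReal.toReal_nonneg, ?_, ?_, ?_⟩
  · intro C hC
    have h' : xZero g E C = ∅ := Set.not_nonempty_iff_eq_empty.mp hC
    show (μ (xZero g E C)).toReal = 0
    rw [h', h0, ENNReal.toReal_zero]
  · have hsum : ∑ C : Fin (n + 1) → Fin m, μ (xZero g E C) = 1 := by
      rw [← finAdd μ h0 hadd Finset.univ _
        (fun a _ b _ hab => hTdisj a b hab)]
      have : (⋃ C ∈ (Finset.univ : Finset (Fin (n + 1) → Fin m)), xZero g E C)
          = Set.univ := by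
        apply Set.eq_univ_of_forall
        intro x
        exact Set.mem_biUnion (Finset.mem_univ _) (hcov x)
      rw [this, hμ1]
    rw [← ENNReal.toReal_sum (fun C _ => hne _), hsum, ENNReal.toReal_one]
  · intro j i
    -- first sum equals μ ((g j)⁻¹ • E i), second equals μ (E i)
    have key : ∀ (P : (Fin (n + 1) → Fin m) → Prop) [DecidablePred P] (S : Set X),
        (∀ C, P C → xZero g E C ⊆ S) →
        (∀ x ∈ S, ∀ C, x ∈ xZero g E C → P C) →
        ∑ C ∈ Finset.univ.filter P, μ (xZero g E C) = μ S := by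
      intro P _ S hsub hback
      rw [← finAdd μ h0 hadd _ _
        (fun a _ b _ hab => hTdisj a b hab)]
      congr 1
      apply Set.Subset.antisymm
      · exact Set.iUnion₂_subset fun C hC =>
          hsub C (Finset.mem_filter.mp hC).2
      · intro x hx
        refine Set.mem_biUnion (Finset.mem_filter.mpr
          ⟨Finset.mem_univ _, hback x hx _ (hcov x)⟩) (hcov x)
    have h1 : ∑ C ∈ Finset.univ.filter (fun C => C j.succ = i), μ (xZero g E C)
        = μ ((g j)⁻¹ • E i) := by
      apply key
      · intro C hC x hx
        rw [hmem] at hx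
        rw [Set.mem_inv_smul_set_iff]
        exact hC ▸ hx.2 j
      · intro x hx C hxC
        rw [hmem] at hxC
        rw [Set.mem_inv_smul_set_iff] at hx
        exact huniq (g j • x) _ _ (hxC.2 j) hx
    have h2 : ∑ C ∈ Finset.univ.filter (fun C => C 0 = i), μ (xZero g E C)
        = μ (E i) := by
      apply key
      · intro C hC x hx
        rw [hmem] at hx
        exact hC ▸ hx.1
      · intro x hx C hxC
        rw [hmem] at hxC
        exact huniq x _ _ hxC.1 hx
    rw [← ENNReal.toReal_sum (fun C _ => hne _),
      ← ENNReal.toReal_sum (fun C _ => hne _), h1, h2, hinv]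
end

section
/- Let a finitely generated group G act on a set X. If the system of configuration equations Eq(𝔤,𝓔;X) has a normalized solution for every configuration pair (𝔤,𝓔), then the action G ↷ X is amenable. -/
open scoped Pointwise ENNReal

section Stmt2Aux

open Classical

variable {G X : Type*} [Group G] [MulAction G X]

noncomputable def atomE (t : Finset (Set X)) (σ : {a // a ∈ t} → Bool) : Set X :=
  ⋂ a : {a // a ∈ t}, if σ a then (a : Set X) else (↑a : Set X)ᶜ

lemma atomE_subset_of_true {t : Finset (Set X)} {σ : {a // a ∈ t} → Bool}
    {a : {a // a ∈ t}} (h : σ a = true) : atomE t σ ⊆ (a : Set X) := by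
  intro x hx
  simpa [h] using Set.mem_iInter.mp hx a

lemma atomE_subset_of_false {t : Finset (Set X)} {σ : {a // a ∈ t} → Bool}
    {a : {a // a ∈ t}} (h : σ a = false) : atomE t σ ⊆ ((a : Set X))ᶜ := by
  intro x hx
  simpa [h] using Set.mem_iInter.mp hx a

noncomputable def mOf (t : Finset (Set X)) : ℕ := Fintype.card ({a // a ∈ t} → Bool)

noncomputable def EOf (t : Finset (Set X)) : Fin (mOf t) → Set X :=
  fun i => atomE t ((Fintype.equivFin ({a // a ∈ t} → Bool)).symm i)

lemma EOf_dichotomy {t : Finset (Set X)} {A : Set X} (hA : A ∈ t) (i : Fin (mOf t)) :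
    EOf t i ⊆ A ∨ EOf t i ⊆ Aᶜ := by
  cases hb : ((Fintype.equivFin ({a // a ∈ t} → Bool)).symm i) ⟨A, hA⟩ with
  | false => exact Or.inr (atomE_subset_of_false hb)
  | true => exact Or.inl (atomE_subset_of_true hb)

lemma EOf_partition (t : Finset (Set X)) : IsPartition (EOf t) := by
  constructor
  · intro i j hij
    have hσ : (Fintype.equivFin ({a // a ∈ t} → Bool)).symm i ≠
        (Fintype.equivFin ({a // a ∈ t} → Bool)).symm j := by
      intro hh
      exact hij ((Fintype.equivFin ({a // a ∈ t} → Bool)).symm.injective hh)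
    obtain ⟨a, ha⟩ := Function.ne_iff.mp hσ
    rw [Set.disjoint_left]
    intro x hxi hxj
    cases h1 : ((Fintype.equivFin ({a // a ∈ t} → Bool)).symm i) a <;>
      cases h2 : ((Fintype.equivFin ({a // a ∈ t} → Bool)).symm j) a
    · exact ha (h1.trans h2.symm)
    · exact (atomE_subset_of_false h1 hxi) (atomE_subset_of_true h2 hxj)
    · exact (atomE_subset_of_false h2 hxj) (atomE_subset_of_true h1 hxi)
    · exact ha (h1.trans h2.symm)
  · rw [Set.eq_univ_iff_forall]
    intro x
    refine Set.mem_iUnion.mpr ⟨Fintype.equivFin ({a // a ∈ t} → Bool)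
      (fun a => decide (x ∈ (a : Set X))), ?_⟩
    show x ∈ atomE t _
    rw [Equiv.symm_apply_apply]
    refine Set.mem_iInter.mpr fun a => ?_
    by_cases hxa : x ∈ (a : Set X) <;> simp [hxa]

noncomputable def gOf (s : Finset G) : Fin s.card → G := fun i => ↑(s.equivFin.symm i)

noncomputable def phi {s : Finset G} {t : Finset (Set X)}
    (f : (Fin (s.card + 1) → Fin (mOf t)) → ℝ) (A : Set X) : ℝ :=
  ∑ i ∈ Finset.univ.filter (fun i => EOf t i ⊆ A ∧ (EOf t i).Nonempty),
    ∑ C ∈ Finset.univ.filter (fun C => C 0 = i), f C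

variable {s : Finset G} {t : Finset (Set X)}
  {f : (Fin (s.card + 1) → Fin (mOf t)) → ℝ}

lemma nu_eq_zero (hf : IsNormalizedSolution (gOf s) (EOf t) f) {i : Fin (mOf t)}
    (hi : EOf t i = ∅) :
    ∑ C ∈ Finset.univ.filter (fun C => C 0 = i), f C = 0 := by
  refine Finset.sum_eq_zero fun C hC => ?_
  have h0 : C 0 = i := (Finset.mem_filter.mp hC).2
  refine hf.2.1 C fun hCon => ?_
  obtain ⟨x, hx⟩ := hCon
  have hx1 : x ∈ EOf t (C 0) := hx.1
  rw [h0, hi] at hx1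
  exact hx1

lemma phi_nonneg (hf : IsNormalizedSolution (gOf s) (EOf t) f) (A : Set X) :
    0 ≤ phi f A :=
  Finset.sum_nonneg fun i _ => Finset.sum_nonneg fun C _ => hf.1 C

lemma phi_univ (hf : IsNormalizedSolution (gOf s) (EOf t) f) :
    phi f Set.univ = 1 := by
  unfold phi
  have h1 : (Finset.univ.filter (fun i => EOf t i ⊆ Set.univ ∧ (EOf t i).Nonempty)) =
      Finset.univ.filter (fun i => (EOf t i).Nonempty) := by
    simp [Set.subset_univ]
  rw [h1, Finset.sum_subset (Finset.filter_subset _ _) (fun i _ hi => nu_eq_zero hf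
    (Set.not_nonempty_iff_eq_empty.mp (by simpa using hi)))]
  have h2 := Finset.sum_fiberwise_eq_sum_filter (Finset.univ)
    (Finset.univ : Finset (Fin (mOf t))) (fun C : Fin (s.card + 1) → Fin (mOf t) => C 0) f
  simp only [Finset.mem_univ, Finset.filter_true] at h2
  rw [h2]
  exact hf.2.2.1

lemma phi_add (hf : IsNormalizedSolution (gOf s) (EOf t) f) {A B : Set X}
    (hA : A ∈ t) (hAB : Disjoint A B) :
    phi f (A ∪ B) = phi f A + phi f B := by
  unfold phi
  have hdisj : Disjoint
      (Finset.univ.filter (fun i => EOf t i ⊆ A ∧ (EOf t i).Nonempty))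
      (Finset.univ.filter (fun i => EOf t i ⊆ B ∧ (EOf t i).Nonempty)) := by
    rw [Finset.disjoint_left]
    intro i h1 h2
    obtain ⟨hsA, x, hx⟩ := (Finset.mem_filter.mp h1).2
    obtain ⟨hsB, -⟩ := (Finset.mem_filter.mp h2).2
    exact Set.disjoint_left.mp hAB (hsA hx) (hsB hx)
  have hunion : Finset.univ.filter (fun i => EOf t i ⊆ A ∪ B ∧ (EOf t i).Nonempty) =
      (Finset.univ.filter (fun i => EOf t i ⊆ A ∧ (EOf t i).Nonempty)) ∪
      (Finset.univ.filter (fun i => EOf t i ⊆ B ∧ (EOf t i).Nonempty)) := by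
    ext i
    simp only [Finset.mem_filter, Finset.mem_union, Finset.mem_univ, true_and]
    constructor
    · rintro ⟨hsub, hne⟩
      rcases EOf_dichotomy hA i with h | h
      · exact Or.inl ⟨h, hne⟩
      · refine Or.inr ⟨fun x hx => ?_, hne⟩
        rcases hsub hx with hxA | hxB
        · exact absurd hxA (h hx)
        · exact hxB
    · rintro (⟨h1, h2⟩ | ⟨h1, h2⟩)
      · exact ⟨h1.trans Set.subset_union_left, h2⟩
      · exact ⟨h1.trans Set.subset_union_right, h2⟩
  rw [hunion, Finset.sum_union hdisj]

lemma sum_filter_eq_of_con (hf : IsNormalizedSolution (gOf s) (EOf t) f)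
    (P Q : (Fin (s.card + 1) → Fin (mOf t)) → Prop)
    (hPQ : ∀ C ∈ ConSet (gOf s) (EOf t), (P C ↔ Q C)) :
    ∑ C ∈ Finset.univ.filter P, f C = ∑ C ∈ Finset.univ.filter Q, f C := by
  rw [Finset.sum_filter, Finset.sum_filter]
  refine Finset.sum_congr rfl fun C _ => ?_
  by_cases hC : C ∈ ConSet (gOf s) (EOf t)
  · by_cases hP : P C
    · have hQ := (hPQ C hC).mp hP
      simp [hP, hQ]
    · have hQ : ¬ Q C := fun hq => hP ((hPQ C hC).mpr hq)
      rw [if_neg hP, if_neg hQ]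
  · have h0 := hf.2.1 C hC
    simp [h0]

lemma phi_smul (hf : IsNormalizedSolution (gOf s) (EOf t) f)
    {g₀ : G} (hg : g₀ ∈ s) {A : Set X} (hA : A ∈ t) (hA' : g₀⁻¹ • A ∈ t) :
    phi f (g₀⁻¹ • A) = phi f A := by
  set j : Fin s.card := s.equivFin ⟨g₀, hg⟩ with hj
  have hgj : gOf s j = g₀ := by
    rw [hj]
    show ((s.equivFin.symm (s.equivFin ⟨g₀, hg⟩) : {a // a ∈ s}) : G) = g₀
    rw [Equiv.symm_apply_apply]
  have key : ∀ C : Fin (s.card + 1) → Fin (mOf t), C ∈ ConSet (gOf s) (EOf t) →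
      ((EOf t (C 0) ⊆ g₀⁻¹ • A ∧ (EOf t (C 0)).Nonempty) ↔
       (EOf t (C j.succ) ⊆ A ∧ (EOf t (C j.succ)).Nonempty)) := by
    intro C hC
    obtain ⟨x, hx⟩ := hC
    have hx1 : x ∈ EOf t (C 0) := hx.1
    have hxj : g₀ • x ∈ EOf t (C j.succ) := by
      have h2 := Set.mem_iInter.mp hx.2 j
      rwa [hgj, Set.mem_inv_smul_set_iff] at h2
    constructor
    · rintro ⟨hsub, -⟩
      have hxA : g₀ • x ∈ A := by
        have h3 : x ∈ g₀⁻¹ • A := hsub hx1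
        rwa [Set.mem_inv_smul_set_iff] at h3
      rcases EOf_dichotomy hA (C j.succ) with h | h
      · exact ⟨h, ⟨_, hxj⟩⟩
      · exact absurd hxA (h hxj)
    · rintro ⟨hsub, -⟩
      have hxA : x ∈ g₀⁻¹ • A := by
        rw [Set.mem_inv_smul_set_iff]
        exact hsub hxj
      rcases EOf_dichotomy hA' (C 0) with h | h
      · exact ⟨h, ⟨x, hx1⟩⟩
      · exact absurd hxA (h hx1)
  calc phi f (g₀⁻¹ • A)
      = ∑ C ∈ Finset.univ.filter
          (fun C => EOf t (C 0) ⊆ g₀⁻¹ • A ∧ (EOf t (C 0)).Nonempty), f C := by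
        unfold phi
        rw [Finset.sum_fiberwise_eq_sum_filter]
        congr 1
        ext C
        simp
    _ = ∑ C ∈ Finset.univ.filter
          (fun C => EOf t (C j.succ) ⊆ A ∧ (EOf t (C j.succ)).Nonempty), f C := by
        convert sum_filter_eq_of_con hf _ _ key using 3
    _ = ∑ i ∈ Finset.univ.filter (fun i => EOf t i ⊆ A ∧ (EOf t i).Nonempty),
          ∑ C ∈ Finset.univ.filter (fun C => C j.succ = i), f C := by
        rw [Finset.sum_fiberwise_eq_sum_filter]
        congr 1
        ext C
        simp
    _ = phi f A := by
        unfold phi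
        exact Finset.sum_congr rfl fun i _ => hf.2.2.2 j i

end Stmt2Aux

/-- If `G` is finitely generated and every system of configuration equations of the
action `G ↷ X` has a normalized solution, then the action is amenable. -/
theorem stmt2 {G X : Type*} [Group G] [MulAction G X] [Group.FG G]
    (h : ∀ {n m : ℕ} (g : Fin n → G) (E : Fin m → Set X), IsPartition E →
      HasNormalizedSolution g E) :
    ActionAmenable G X := by
  classical
  choose F hF using fun d : Finset G × Finset (Set X) =>
    h (gOf d.1) (EOf d.2) (EOf_partition d.2)
  set Fam : Set X → Finset G × Finset (Set X) → ℝ≥0∞ :=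
    fun A d => ENNReal.ofReal (phi (F d) A) with hFam
  haveI : Nonempty (Finset G × Finset (Set X)) := ⟨(∅, ∅)⟩
  obtain ⟨u, hu⟩ := Ultrafilter.exists_le (Filter.atTop : Filter (Finset G × Finset (Set X)))
  have hL : ∀ A : Set X, Filter.Tendsto (Fam A) ↑u (nhds ((u.map (Fam A)).lim)) := by
    intro A
    have h1 := Ultrafilter.le_nhds_lim (u.map (Fam A))
    rwa [Ultrafilter.coe_map] at h1
  refine ⟨fun A => (u.map (Fam A)).lim, ?_, ?_, ?_⟩
  · refine tendsto_nhds_unique (hL Set.univ) ?_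
    have heq : ∀ d, Fam Set.univ d = 1 := fun d => by
      simp [hFam, phi_univ (hF d)]
    have : Fam Set.univ = fun _ => (1 : ℝ≥0∞) := funext heq
    rw [this]
    exact tendsto_const_nhds
  · intro A B hAB
    have hmem : {d : Finset G × Finset (Set X) | A ∈ d.2} ∈ (↑u : Filter _) := by
      refine hu (Filter.mem_of_superset
        (Filter.Ici_mem_atTop ((∅ : Finset G), ({A} : Finset (Set X)))) ?_)
      intro d hd
      exact hd.2 (Finset.mem_singleton_self A)
    have hev : Fam (A ∪ B) =ᶠ[(↑u : Filter _)] fun d => Fam A d + Fam B d := by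
      filter_upwards [hmem] with d hd
      show ENNReal.ofReal (phi (F d) (A ∪ B)) = _
      rw [phi_add (hF d) hd hAB,
        ENNReal.ofReal_add (phi_nonneg (hF d) A) (phi_nonneg (hF d) B)]
    exact tendsto_nhds_unique (hL (A ∪ B)) (((hL A).add (hL B)).congr' hev.symm)
  · intro g₀ A
    have hmem : {d : Finset G × Finset (Set X) | g₀ ∈ d.1 ∧ A ∈ d.2 ∧ g₀ • A ∈ d.2}
        ∈ (↑u : Filter _) := by
      refine hu (Filter.mem_of_superset
        (Filter.Ici_mem_atTop (({g₀} : Finset G), ({A, g₀ • A} : Finset (Set X)))) ?_)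
      intro d hd
      refine ⟨hd.1 (Finset.mem_singleton_self g₀), ?_, ?_⟩
      · exact hd.2 (by simp)
      · exact hd.2 (by simp)
    have hev : Fam (g₀ • A) =ᶠ[(↑u : Filter _)] Fam A := by
      filter_upwards [hmem] with d hd
      obtain ⟨hg, hA, hA2⟩ := hd
      have hs := phi_smul (hF d) hg (A := g₀ • A) hA2 (by rwa [inv_smul_smul])
      rw [inv_smul_smul] at hs
      show ENNReal.ofReal (phi (F d) (g₀ • A)) = ENNReal.ofReal (phi (F d) A)
      rw [hs]
    exact tendsto_nhds_unique (hL (g₀ • A)) ((hL A).congr' hev.symm)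
end

section
/- Let a group G act on X, let (𝔤,𝓔) be a configuration pair and let 𝓔' be a partition of X refining 𝓔 (same tuple 𝔤). If Eq(𝔤,𝓔';X) admits a normalized solution, then Eq(𝔤,𝓔;X) admits a normalized solution; explicitly, setting z_D = Σ_{C ≪ D} z_C, where C ≪ D means that C refines D, i.e. E'_{C_j} ⊆ E_{D_j} for all j, yields such a solution. -/
open scoped Pointwise ENNReal

open Classical in
/-- If `E'` is a partition refining `E` and `Eq(g, E'; X)` has a normalized solution `f`,
then `D ↦ ∑ {f C : C ≪ D}` (sum over the configurations `C` of `(g, E')` whose pieces are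
contained in the corresponding pieces of `D`) is a normalized solution of `Eq(g, E; X)`. -/
theorem stmt5 {G X : Type*} [Group G] [MulAction G X] {n m t : ℕ}
    (g : Fin n → G) (E : Fin m → Set X) (E' : Fin t → Set X)
    (hE : IsPartition E) (hE' : IsPartition E')
    (href : ∀ p : Fin t, ∃ l : Fin m, E' p ⊆ E l)
    (f : (Fin (n + 1) → Fin t) → ℝ) (hf : IsNormalizedSolution g E' f) :
    IsNormalizedSolution g E
      (fun D => ∑ C ∈ Finset.univ.filter
        (fun C : Fin (n + 1) → Fin t => ∀ j, E' (C j) ⊆ E (D j)), f C) := by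
  classical
  obtain ⟨hf0, hfs, hf1, hfe⟩ := hf
  set φ : Fin t → Fin m := fun p => Classical.choose (href p) with hφdef
  have hφ : ∀ p, E' p ⊆ E (φ p) := fun p => Classical.choose_spec (href p)
  have huniq : ∀ (p : Fin t) (l : Fin m), (E' p).Nonempty → E' p ⊆ E l → l = φ p := by
    intro p l hne hsub
    by_contra hll
    obtain ⟨x, hx⟩ := hne
    exact Set.disjoint_left.mp (hE.1 l (φ p) hll) (hsub hx) (hφ p hx)
  have hne : ∀ C : Fin (n + 1) → Fin t, f C ≠ 0 → ∀ j, (E' (C j)).Nonempty := by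
    intro C hC j
    have hCcon : C ∈ ConSet g E' := by
      by_contra h; exact hC (hfs C h)
    obtain ⟨x, hx⟩ := hCcon
    induction j using Fin.cases with
    | zero => exact ⟨x, hx.1⟩
    | succ i =>
        exact ⟨g i • x, Set.mem_inv_smul_set_iff.mp (Set.mem_iInter.mp hx.2 i)⟩
  have hkey : ∀ C : Fin (n + 1) → Fin t, f C ≠ 0 →
      ∀ D : Fin (n + 1) → Fin m, (∀ j, E' (C j) ⊆ E (D j)) ↔ D = φ ∘ C := by
    intro C hC D
    constructor
    · intro h; funext j; exact huniq _ _ (hne C hC j) (h j)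
    · rintro rfl j; exact hφ (C j)
  have hsum : ∀ (Q : (Fin (n + 1) → Fin m) → Prop) [DecidablePred Q],
      (∑ D ∈ Finset.univ.filter Q,
         ∑ C ∈ Finset.univ.filter (fun C => ∀ j, E' (C j) ⊆ E (D j)), f C)
        = ∑ C ∈ Finset.univ.filter (fun C => Q (φ ∘ C)), f C := by
    intro Q _
    have step1 :
        (∑ D ∈ Finset.univ.filter Q,
           ∑ C ∈ Finset.univ.filter (fun C => ∀ j, E' (C j) ⊆ E (D j)), f C)
          = ∑ D : Fin (n + 1) → Fin m, ∑ C : Fin (n + 1) → Fin t,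
              if Q D ∧ (∀ j, E' (C j) ⊆ E (D j)) then f C else 0 := by
      rw [Finset.sum_filter]
      refine Finset.sum_congr rfl fun D _ => ?_
      rw [Finset.sum_filter]
      by_cases hQ : Q D <;> simp [hQ]
    rw [step1, Finset.sum_comm]
    rw [Finset.sum_filter]
    refine Finset.sum_congr rfl fun C _ => ?_
    by_cases hC : f C = 0
    · simp [hC]
    · simp_rw [hkey C hC, and_comm (a := Q _), ite_and]
      rw [Finset.sum_ite_eq' Finset.univ (φ ∘ C) (fun D => if Q D then f C else 0)]
      simp
  have hfib : ∀ (k : Fin (n + 1)) (i : Fin m),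
      (∑ C ∈ Finset.univ.filter (fun C => φ (C k) = i), f C)
        = ∑ p ∈ Finset.univ.filter (fun p => φ p = i),
            ∑ C ∈ Finset.univ.filter (fun C => C k = p), f C := by
    intro k i
    rw [Finset.sum_fiberwise_eq_sum_filter]
    refine Finset.sum_congr ?_ fun _ _ => rfl
    ext C
    simp
  refine ⟨?_, ?_, ?_, ?_⟩
  · intro D
    exact Finset.sum_nonneg fun C _ => hf0 C
  · intro D hD
    refine Finset.sum_eq_zero fun C hC => ?_
    by_contra hfC
    have hCcon : C ∈ ConSet g E' := by
      by_contra h; exact hfC (hfs C h)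
    obtain ⟨x, hx⟩ := hCcon
    rw [Finset.mem_filter] at hC
    refine hD ⟨x, ?_, ?_⟩
    · exact hC.2 0 hx.1
    · refine Set.mem_iInter.mpr fun i => ?_
      have := Set.mem_inv_smul_set_iff.mp (Set.mem_iInter.mp hx.2 i)
      exact Set.mem_inv_smul_set_iff.mpr (hC.2 i.succ this)
  · rw [← hf1]
    have := hsum (fun _ => True)
    simpa using this
  · intro j i
    have h1 := hsum (fun D => D j.succ = i)
    have h2 := hsum (fun D => D 0 = i)
    refine h1.trans (Eq.trans ?_ h2.symm)
    show (∑ C ∈ Finset.univ.filter (fun C => φ (C j.succ) = i), f C)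
        = ∑ C ∈ Finset.univ.filter (fun C => φ (C 0) = i), f C
    rw [hfib j.succ i, hfib 0 i]
    exact Finset.sum_congr rfl fun p hp => hfe j p
end

section
/- Let a group G act on X, and let (𝔤',𝓔') be a refinement of the configuration pair (𝔤,𝓔) (i.e., 𝓔' refines 𝓔 and 𝔤' extends 𝔤). If Eq(𝔤',𝓔';X) admits a normalized solution, then so does Eq(𝔤,𝓔;X). -/
open scoped Pointwise ENNReal

/-- If `(g', E')` is a refinement of the configuration pair `(g, E)` and
`Eq(g', E'; X)` admits a normalized solution, then so does `Eq(g, E; X)`. -/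
theorem stmt7 {G X : Type*} [Group G] [MulAction G X] {n s m t : ℕ}
    (hns : n ≤ s) (g : Fin n → G) (g' : Fin s → G)
    (hext : ∀ i : Fin n, g' (Fin.castLE hns i) = g i)
    (E : Fin m → Set X) (E' : Fin t → Set X)
    (hE : IsPartition E) (hE' : IsPartition E')
    (href : ∀ p : Fin t, ∃ l : Fin m, E' p ⊆ E l)
    (h : HasNormalizedSolution g' E') : HasNormalizedSolution g E := by
  classical
  obtain ⟨f', hpos', hsupp', hsum', heq'⟩ := h
  set l : Fin t → Fin m := fun p => (href p).choose with hl_def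
  have hl : ∀ p, E' p ⊆ E (l p) := fun p => (href p).choose_spec
  have hns1 : n + 1 ≤ s + 1 := Nat.succ_le_succ hns
  set r : (Fin (s + 1) → Fin t) → (Fin (n + 1) → Fin m) :=
    fun C' j => l (C' (Fin.castLE hns1 j)) with hr_def
  -- key: castLE commutes with 0 and succ
  have hcast0 : (Fin.castLE hns1 (0 : Fin (n + 1))) = 0 := rfl
  have hcastsucc : ∀ j : Fin n,
      Fin.castLE hns1 j.succ = (Fin.castLE hns j).succ := by
    intro j; ext; simp
  -- membership in configuration sets is preserved
  have hmem : ∀ C', C' ∈ ConSet g' E' → r C' ∈ ConSet g E := by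
    intro C' hC'
    obtain ⟨x, hx⟩ := hC'
    refine ⟨x, ?_, ?_⟩
    · exact hl _ (by simpa [xZero, hcast0] using hx.1)
    · simp only [Set.mem_iInter]
      intro i
      have hx2 := hx.2
      simp only [xZero, Set.mem_iInter] at hx2
      have := hx2 (Fin.castLE hns i)
      rw [Set.mem_inv_smul_set_iff] at this ⊢
      rw [← hext i]
      exact hl _ (by simpa [hr_def, hcastsucc] using this)
  -- the pushed-forward solution
  refine ⟨fun C => ∑ C' ∈ Finset.univ.filter fun C' => r C' = C, f' C', ?_, ?_, ?_, ?_⟩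
  · intro C; exact Finset.sum_nonneg fun C' _ => hpos' C'
  · intro C hC
    refine Finset.sum_eq_zero fun C' hC' => ?_
    by_contra hne
    have : C' ∈ ConSet g' E' := by
      by_contra hc; exact hne (hsupp' C' hc)
    exact hC ((Finset.mem_filter.1 hC').2 ▸ hmem C' this)
  · rw [← hsum']
    exact Finset.sum_fiberwise_of_maps_to (fun C' _ => Finset.mem_univ _) f'
  · intro j i
    -- reduce both sides to sums over `C'`
    have key : ∀ J : Fin (n + 1),
        (∑ C ∈ Finset.univ.filter fun C => C J = i,
          ∑ C' ∈ Finset.univ.filter fun C' => r C' = C, f' C')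
        = ∑ C' ∈ Finset.univ.filter fun C' => l (C' (Fin.castLE hns1 J)) = i, f' C' := by
      intro J
      rw [Finset.sum_fiberwise_eq_sum_filter Finset.univ
        (Finset.univ.filter fun C => C J = i) r f']
      refine Finset.sum_congr ?_ fun _ _ => rfl
      ext C'
      simp [hr_def]
    -- regroup over the value at the relevant coordinate
    have key2 : ∀ K : Fin (s + 1),
        (∑ C' ∈ Finset.univ.filter fun C' => l (C' K) = i, f' C')
        = ∑ p ∈ Finset.univ.filter fun p => l p = i,
            ∑ C' ∈ Finset.univ.filter fun C' => C' K = p, f' C' := by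
      intro K
      rw [Finset.sum_fiberwise_eq_sum_filter Finset.univ
        (Finset.univ.filter fun p => l p = i) (fun C' => C' K) f']
      refine Finset.sum_congr ?_ fun _ _ => rfl
      ext C'; simp
    rw [key j.succ, key 0, hcast0, key2, key2, hcastsucc j]
    exact Finset.sum_congr rfl fun p _ => heq' (Fin.castLE hns j) p
end

section
/- Let G ↷ X and H ↷ Y be group actions with Con(G ↷ X) = Con(H ↷ Y). If X is finite with |X| = n, then Y is finite with |Y| = n; and X is infinite if and only if Y is infinite. -/
open scoped Pointwise ENNReal

section Aux

lemma aux_mem_con_iff {G X : Type*} [Group G] [MulAction G X] (m : ℕ) :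
    (⟨0, m, Set.univ⟩ : (n : ℕ) × (m : ℕ) × Set (Fin (n + 1) → Fin m)) ∈
      ConCollection G X ↔ ∃ f : X → Fin m, Function.Surjective f := by
  constructor
  · rintro ⟨g, E, hE, hS⟩
    have hmem : ∀ x : X, ∃ i, x ∈ E i := by
      intro x
      have : x ∈ ⋃ i, E i := hE.2 ▸ Set.mem_univ x
      exact Set.mem_iUnion.mp this
    refine ⟨fun x => (hmem x).choose, fun i => ?_⟩
    have hC : (fun _ : Fin 1 => i) ∈ ConSet g E := by
      rw [← hS]; exact Set.mem_univ _
    obtain ⟨x, hx⟩ := hC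
    have hx' : x ∈ E i := hx.1
    refine ⟨x, ?_⟩
    by_contra hne
    exact (hE.1 _ _ hne).ne_of_mem ((hmem x).choose_spec) hx' rfl
  · rintro ⟨f, hf⟩
    refine ⟨Fin.elim0, fun i => f ⁻¹' {i}, ⟨?_, ?_⟩, ?_⟩
    · intro i j hij
      exact Set.disjoint_left.mpr fun x hx hx' => hij (hx.symm.trans hx')
    · ext x; simp only [Set.mem_iUnion, Set.mem_univ, iff_true]
      exact ⟨f x, rfl⟩
    · ext C
      simp only [Set.mem_univ, true_iff, ConSet, Set.mem_setOf_eq]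
      obtain ⟨x, hx⟩ := hf (C 0)
      refine ⟨x, hx, ?_⟩
      exact Set.mem_iInter.mpr fun i => i.elim0
  
lemma aux_infinite_surj {X : Type*} [Infinite X] (m : ℕ) :
    ∃ f : X → Fin (m + 1), Function.Surjective f := by
  set ι : Fin (m + 1) → X := fun i => Infinite.natEmbedding X i with hι
  have hinj : Function.Injective ι := by
    intro a b hab
    exact Fin.val_injective ((Infinite.natEmbedding X).injective hab)
  exact ⟨Function.invFun ι, Function.invFun_surjective hinj⟩

lemma aux_le_card {X : Type*} [Finite X] {m : ℕ}
    (hf : ∃ f : X → Fin m, Function.Surjective f) : m ≤ Nat.card X := by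
  obtain ⟨f, hf⟩ := hf
  simpa using Nat.card_le_card_of_surjective f hf

lemma aux_surj_card {X : Type*} [Finite X] [Nonempty X] :
    ∃ f : X → Fin (Nat.card X), Function.Surjective f :=
  ⟨Finite.equivFin X, (Finite.equivFin X).surjective⟩

lemma aux_finite_of_key {X Y : Type*} [Finite Y]
    (key : ∀ m, (∃ f : X → Fin m, Function.Surjective f) →
      (∃ f : Y → Fin m, Function.Surjective f)) : Finite X := by
  by_contra hX
  have : Infinite X := not_finite_iff_infinite.mp hX
  have := key (Nat.card Y + 1) (aux_infinite_surj _)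
  have := aux_le_card this
  omega

lemma aux_main {X' Y' : Type*}
    (key : ∀ m, (∃ f : X' → Fin m, Function.Surjective f) ↔
      (∃ f : Y' → Fin m, Function.Surjective f))
    (hX : Finite X') : Finite Y' ∧ Nat.card Y' = Nat.card X' := by
  have hYfin : Finite Y' :=
    aux_finite_of_key (Y := X') fun m hm => (key m).mpr hm
  refine ⟨hYfin, ?_⟩
  rcases isEmpty_or_nonempty X' with hXe | hXn
  · rcases isEmpty_or_nonempty Y' with hYe | hYn
    · haveI := hXe; haveI := hYe; simp [Nat.card_of_isEmpty]
    · obtain ⟨f, hf⟩ := (key 1).mpr ⟨fun _ => 0, fun i => ⟨Classical.arbitrary Y', Subsingleton.elim _ _⟩⟩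
      obtain ⟨x, -⟩ := hf 0
      exact absurd (Nonempty.intro x) (not_nonempty_iff.mpr hXe)
  · have h1 : Nat.card X' ≤ Nat.card Y' := aux_le_card ((key _).mp aux_surj_card)
    have hYn : Nonempty Y' := by
      obtain ⟨f, hf⟩ := (key (Nat.card X')).mp aux_surj_card
      have hpos : 0 < Nat.card X' := Nat.card_pos
      obtain ⟨y, -⟩ := hf ⟨0, hpos⟩
      exact ⟨y⟩
    have h2 : Nat.card Y' ≤ Nat.card X' := aux_le_card ((key _).mpr aux_surj_card)
    omega

end Aux

/-- Configuration equivalent actions: if `X` is finite then `Y` is finite of the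
same cardinality, and `X` is infinite iff `Y` is infinite. -/
theorem stmt8 {G X H Y : Type*} [Group G] [MulAction G X] [Group H] [MulAction H Y]
    (h : ConCollection G X = ConCollection H Y) :
    (Finite X → Finite Y ∧ Nat.card Y = Nat.card X) ∧ (Infinite X ↔ Infinite Y) := by
  have key : ∀ m, (∃ f : X → Fin m, Function.Surjective f) ↔
      (∃ f : Y → Fin m, Function.Surjective f) := by
    intro m
    rw [← aux_mem_con_iff (G := G) m, ← aux_mem_con_iff (G := H) m, h]
  refine ⟨aux_main key, ?_⟩
  rw [← not_finite_iff_infinite, ← not_finite_iff_infinite]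
  constructor
  · intro hX hY
    exact hX (aux_main (fun m => (key m).symm) hY).1
  · intro hY hX
    exact hY (aux_main key hX).1
end

section
/- Let G and H be finitely generated groups acting transitively on sets X and Y respectively. If Con(G ↷ X) = Con(H ↷ Y), then |X| = |Y|. -/
open scoped Pointwise ENNReal

universe u₁ u₂ u₃ u₄

section Aux

open Function

lemma aux_countable_of_fg (G : Type*) [Group G] [Group.FG G] : Countable G := by
  obtain ⟨S, hS, hfin⟩ := Group.fg_iff.mp ‹_›
  haveI : Countable ↥(S ∪ S⁻¹) := ((hfin.union hfin.inv).countable).to_subtype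
  have hsurj : Function.Surjective
      (fun l : List ↥(S ∪ S⁻¹) => (l.map Subtype.val).prod) := by
    intro g
    have hg' : g ∈ Subgroup.closure S := by rw [hS]; trivial
    have hg : g ∈ Submonoid.closure (S ∪ S⁻¹) := by
      rw [← Subgroup.closure_toSubmonoid]
      exact hg'
    obtain ⟨l, hl, hprod⟩ := Submonoid.exists_list_of_mem_closure hg
    refine ⟨l.pmap (fun x hx => (⟨x, hx⟩ : ↥(S ∪ S⁻¹))) hl, ?_⟩
    simpa [List.map_pmap] using hprod
  exact hsurj.countable

lemma aux_countable_of_pretransitive (G X : Type*) [Group G] [MulAction G X] [Group.FG G]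
    (hGX : MulAction.IsPretransitive G X) : Countable X := by
  haveI : Countable G := aux_countable_of_fg G
  cases isEmpty_or_nonempty X with
  | inl h => infer_instance
  | inr h =>
    obtain ⟨x⟩ := h
    have hs : Function.Surjective (fun g : G => g • x) := fun y => hGX.exists_smul_eq x y
    exact hs.countable

lemma aux_xZero_zero {G X : Type*} [Group G] [MulAction G X] {m : ℕ}
    (g : Fin 0 → G) (E : Fin m → Set X) (C : Fin 1 → Fin m) :
    xZero g E C = E (C 0) := by
  simp [xZero]

lemma aux_mem_con_univ_iff (G X : Type*) [Group G] [MulAction G X] (m : ℕ) :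
    (⟨0, m, Set.univ⟩ : (n : ℕ) × (m : ℕ) × Set (Fin (n + 1) → Fin m)) ∈ ConCollection G X ↔
      ∃ f : X → Fin m, Function.Surjective f := by
  constructor
  · rintro ⟨g, E, ⟨hdisj, hunion⟩, hset⟩
    have hne : ∀ i, (E i).Nonempty := by
      intro i
      have hmem : (fun _ => i : Fin 1 → Fin m) ∈ ConSet g E := by
        rw [← hset]; trivial
      simpa [ConSet, aux_xZero_zero] using hmem
    have hex : ∀ x : X, ∃ i, x ∈ E i := by
      intro x
      have hx : x ∈ ⋃ i, E i := hunion ▸ Set.mem_univ x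
      simpa using hx
    refine ⟨fun x => (hex x).choose, fun i => ?_⟩
    obtain ⟨x, hx⟩ := hne i
    refine ⟨x, ?_⟩
    by_contra hne'
    exact Set.disjoint_left.mp (hdisj _ _ hne') (hex x).choose_spec hx
  · rintro ⟨f, hf⟩
    refine ⟨Fin.elim0, fun i => f ⁻¹' {i}, ⟨?_, ?_⟩, ?_⟩
    · intro i j hij
      rw [Set.disjoint_left]
      rintro x hx hx'
      simp only [Set.mem_preimage, Set.mem_singleton_iff] at hx hx'
      exact hij (hx ▸ hx' ▸ rfl)
    · ext x
      simp only [Set.mem_iUnion, Set.mem_preimage, Set.mem_singleton_iff, Set.mem_univ, iff_true]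
      exact ⟨f x, rfl⟩
    · symm
      rw [Set.eq_univ_iff_forall]
      intro C
      show (xZero Fin.elim0 (fun i => f ⁻¹' {i}) C).Nonempty
      rw [aux_xZero_zero]
      obtain ⟨x, hx⟩ := hf (C 0)
      exact ⟨x, by simp [hx]⟩

lemma aux_surj_of_infinite (Z : Type*) [Infinite Z] (m : ℕ) :
    ∃ f : Z → Fin (m + 1), Function.Surjective f := by
  have e : Fin (m + 1) ↪ Z := (Fin.valEmbedding).trans (Infinite.natEmbedding Z)
  exact ⟨Function.invFun e, Function.invFun_surjective e.injective⟩

end Aux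

/-- Finitely generated groups acting transitively with equal configuration
collections act on sets of the same cardinality. -/
theorem stmt9 {G : Type u₁} {X : Type u₂} {H : Type u₃} {Y : Type u₄}
    [Group G] [MulAction G X] [Group H] [MulAction H Y]
    [Group.FG G] [Group.FG H]
    (hGX : MulAction.IsPretransitive G X) (hHY : MulAction.IsPretransitive H Y)
    (h : ConCollection G X = ConCollection H Y) :
    Cardinal.lift.{u₄} (Cardinal.mk X) = Cardinal.lift.{u₂} (Cardinal.mk Y) := by
  haveI : Countable X := aux_countable_of_pretransitive G X hGX
  haveI : Countable Y := aux_countable_of_pretransitive H Y hHY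
  have hc : ∀ m : ℕ, (∃ f : X → Fin m, Function.Surjective f) ↔
      (∃ f : Y → Fin m, Function.Surjective f) := by
    intro m
    rw [← aux_mem_con_univ_iff G X m, ← aux_mem_con_univ_iff H Y m, h]
  by_cases hfX : Finite X
  · have hfY : Finite Y := by
      by_contra hY
      haveI : Infinite Y := not_finite_iff_infinite.mp hY
      obtain ⟨f, hf⟩ := aux_surj_of_infinite Y (Nat.card X)
      obtain ⟨f', hf'⟩ := (hc _).mpr ⟨f, hf⟩
      have hle := Nat.card_le_card_of_surjective f' hf'
      simp only [Nat.card_eq_fintype_card, Fintype.card_fin] at hle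
      omega
    have h1 : Nat.card X ≤ Nat.card Y := by
      obtain ⟨f', hf'⟩ := (hc _).mp ⟨(Finite.equivFin X), (Finite.equivFin X).surjective⟩
      have hle := Nat.card_le_card_of_surjective f' hf'
      simpa using hle
    have h2 : Nat.card Y ≤ Nat.card X := by
      obtain ⟨f', hf'⟩ := (hc _).mpr ⟨(Finite.equivFin Y), (Finite.equivFin Y).surjective⟩
      have hle := Nat.card_le_card_of_surjective f' hf'
      simpa using hle
    have hk : Nat.card X = Nat.card Y := le_antisymm h1 h2
    exact Cardinal.lift_mk_eq'.mpr
      ⟨(Finite.equivFin X).trans (Finite.equivFinOfCardEq hk.symm).symm⟩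
  · haveI : Infinite X := not_finite_iff_infinite.mp hfX
    have hfY : Infinite Y := by
      rw [← not_finite_iff_infinite]
      intro hY
      obtain ⟨f, hf⟩ := aux_surj_of_infinite X (Nat.card Y)
      obtain ⟨f', hf'⟩ := (hc _).mp ⟨f, hf⟩
      have hle := Nat.card_le_card_of_surjective f' hf'
      simp only [Nat.card_eq_fintype_card, Fintype.card_fin] at hle
      omega
    rw [Cardinal.mk_eq_aleph0 X, Cardinal.mk_eq_aleph0 Y]
    simp
end

section
/- Let G ↷ X and H ↷ Y be group actions, f : X → Y a surjection, and φ : G → H a surjective group homomorphism satisfying f(g·x) = φ(g)·f(x) for all g ∈ G, x ∈ X. Then Con(H ↷ Y) ⊆ Con(G ↷ X). -/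
open scoped Pointwise ENNReal

/-- If `f : X → Y` is onto and equivariant along a surjective homomorphism `φ : G → H`,
then `Con(H ↷ Y) ⊆ Con(G ↷ X)`. -/
theorem stmt10 {G X H Y : Type*} [Group G] [MulAction G X] [Group H] [MulAction H Y]
    (f : X → Y) (hf : Function.Surjective f)
    (φ : G →* H) (hφ : Function.Surjective φ)
    (hequiv : ∀ (g : G) (x : X), f (g • x) = φ g • f x) :
    ConCollection H Y ⊆ ConCollection G X := by
  rintro ⟨n, m, S⟩ ⟨g, E, ⟨hdisj, hcov⟩, hS⟩
  choose g' hg' using fun i => hφ (g i)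
  refine ⟨fun i => g' i, fun i => f ⁻¹' (E i), ⟨?_, ?_⟩, ?_⟩
  · intro i j hij
    exact (hdisj i j hij).preimage f
  · rw [← Set.preimage_iUnion, hcov, Set.preimage_univ]
  · rw [hS]
    have key : ∀ C, xZero (fun i => g' i) (fun i => f ⁻¹' (E i)) C = f ⁻¹' (xZero g E C) := by
      intro C
      unfold xZero
      rw [Set.preimage_inter, Set.preimage_iInter]
      congr 1
      ext x
      simp only [Set.mem_iInter, Set.mem_inv_smul_set_iff, Set.mem_preimage]
      constructor
      · intro h i
        have := h i
        rw [hequiv, hg'] at this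
        exact this
      · intro h i
        rw [hequiv, hg']
        exact h i
    ext C
    simp only [ConSet, Set.mem_setOf_eq, key]
    constructor
    · rintro ⟨y, hy⟩
      obtain ⟨x, rfl⟩ := hf y
      exact ⟨x, hy⟩
    · rintro ⟨x, hx⟩
      exact ⟨f x, hx⟩
end

section
/- If a group G acts transitively on a set X, then Con(G ↷ X) ⊆ Con(G), where Con(G) is the configuration collection of the action of G on itself by multiplication. -/
open scoped Pointwise ENNReal

/-- If `G` acts transitively on a (nonempty) set `X`, then
`Con(G ↷ X) ⊆ Con(G)`, the configuration collection of `G` acting on itself. -/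
theorem stmt11 {G X : Type*} [Group G] [MulAction G X] [Nonempty X]
    (h : MulAction.IsPretransitive G X) :
    ConCollection G X ⊆ ConCollection G G := by
  rintro ⟨n, m, S⟩ ⟨g, E, ⟨hdisj, hcov⟩, hS⟩
  obtain ⟨x₀⟩ := (inferInstance : Nonempty X)
  set π : G → X := fun a => a • x₀ with hπ
  have hsurj : Function.Surjective π := fun x => h.exists_smul_eq x₀ x
  have hpre : ∀ (a : G) (A : Set X), π ⁻¹' (a • A) = a • (π ⁻¹' A) := by
    intro a A
    ext b
    simp only [Set.mem_preimage, Set.mem_smul_set_iff_inv_smul_mem, hπ, smul_smul, smul_eq_mul]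
  refine ⟨g, fun i => π ⁻¹' (E i), ⟨?_, ?_⟩, hS.trans ?_⟩
  · intro i j hij
    exact (hdisj i j hij).preimage π
  · rw [← Set.preimage_iUnion, hcov, Set.preimage_univ]
  · have hx0 : ∀ C, (xZero g (fun i => π ⁻¹' (E i)) C : Set G) = π ⁻¹' (xZero g E C) := by
      intro C
      simp only [xZero, Set.preimage_inter, Set.preimage_iInter, hpre]
    ext C
    simp only [ConSet, Set.mem_setOf_eq, hx0]
    constructor
    · rintro ⟨x, hx⟩
      obtain ⟨b, rfl⟩ := hsurj x
      exact ⟨b, hx⟩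
    · rintro ⟨b, hb⟩; exact ⟨π b, hb⟩
end

section
/- If G ↷ X and H ↷ Y are group actions with Con(H ↷ Y) ⊆ Con(G ↷ X), then τ(G ↷ X) ≤ τ(H ↷ Y), where τ denotes the Tarski number of the action. -/
open scoped Pointwise ENNReal

private lemma key_transfer {G X H Y : Type*} [Group G] [MulAction G X] [Group H]
    [MulAction H Y] (hcon : ConCollection H Y ⊆ ConCollection G X) (p q : ℕ)
    (hpar : IsParadoxicalWith H Y p q) : IsParadoxicalWith G X p q := by
  classical
  obtain ⟨A, B, g, h, hA, hB, hAB, hgA, hhB⟩ := hpar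
  set n := p + q with hn
  set D : Fin n → Set Y := fun i => Sum.elim A B (finSumFinEquiv.symm i) with hD
  set E : Fin (n + 1) → Set Y := Fin.cases (⋃ i, D i)ᶜ D with hE
  set t : Fin n → H := fun i =>
    Sum.elim (fun k => (g k)⁻¹) (fun k => (h k)⁻¹) (finSumFinEquiv.symm i) with ht
  have hE0 : E 0 = (⋃ i, D i)ᶜ := rfl
  have hEs : ∀ i : Fin n, E i.succ = D i := fun i => by simp [hE]
  -- D is pairwise disjoint
  have hDdisj : ∀ i j : Fin n, i ≠ j → Disjoint (D i) (D j) := by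
    intro i j hij
    have hij' : finSumFinEquiv.symm i ≠ finSumFinEquiv.symm j := by
      intro hc; exact hij (finSumFinEquiv.symm.injective hc)
    simp only [hD]
    rcases hu : finSumFinEquiv.symm i with a | a <;>
      rcases hv : finSumFinEquiv.symm j with b | b <;>
        rw [hu, hv] at hij' <;> simp only [Sum.elim_inl, Sum.elim_inr]
    · exact hA a b (fun hc => hij' (by rw [hc]))
    · exact hAB a b
    · exact (hAB b a).symm
    · exact hB a b (fun hc => hij' (by rw [hc]))
  -- E is a partition of Y
  have hpart : IsPartition E := by
    constructor
    · intro i j hij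
      rcases Fin.eq_zero_or_eq_succ i with rfl | ⟨i', rfl⟩ <;>
        rcases Fin.eq_zero_or_eq_succ j with rfl | ⟨j', rfl⟩
      · exact absurd rfl hij
      · rw [hE0, hEs]
        exact disjoint_compl_left.mono_right (Set.subset_iUnion D j')
      · rw [hE0, hEs]
        exact (disjoint_compl_left.mono_right (Set.subset_iUnion D i')).symm
      · rw [hEs, hEs]
        exact hDdisj i' j' (fun hc => hij (by rw [hc]))
    · rw [Set.eq_univ_iff_forall]
      intro y
      by_cases hy : y ∈ ⋃ i, D i
      · obtain ⟨i, hi⟩ := Set.mem_iUnion.mp hy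
        exact Set.mem_iUnion.mpr ⟨i.succ, (hEs i).symm ▸ hi⟩
      · exact Set.mem_iUnion.mpr ⟨0, hy⟩
  -- transfer the configuration set to X
  have hmem : (⟨n, n + 1, ConSet t E⟩ : (n : ℕ) × (m : ℕ) × Set (Fin (n + 1) → Fin m)) ∈
      ConCollection H Y := ⟨t, E, hpart, rfl⟩
  obtain ⟨g', E', hpart', hS⟩ := hcon hmem
  have hS' : ConSet t E = ConSet g' E' := hS
  -- index of a point in the partition E'
  have hexists : ∀ z : X, ∃ i, z ∈ E' i := by
    intro z
    have := hpart'.2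
    rw [Set.eq_univ_iff_forall] at this
    exact Set.mem_iUnion.mp (this z)
  let idxOf : X → Fin (n + 1) := fun z => Classical.choose (hexists z)
  have hidx : ∀ z : X, z ∈ E' (idxOf z) := fun z => Classical.choose_spec (hexists z)
  -- the configuration of a point x ∈ X
  let Cfg : X → Fin (n + 1) → Fin (n + 1) := fun x =>
    Fin.cases (idxOf x) (fun i => idxOf (g' i • x))
  have hCfg0 : ∀ x, Cfg x 0 = idxOf x := fun x => rfl
  have hCfgs : ∀ x (i : Fin n), Cfg x i.succ = idxOf (g' i • x) := fun x i => by
    simp [Cfg]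
  have hCfgMem : ∀ x : X, Cfg x ∈ ConSet t E := by
    intro x
    rw [hS']
    refine ⟨x, Set.mem_inter ?_ ?_⟩
    · rw [hCfg0]; exact hidx x
    · rw [Set.mem_iInter]
      intro i
      rw [Set.mem_inv_smul_set_iff, hCfgs]
      exact hidx (g' i • x)
  -- key property of E-indices forced by configurations
  have hforce : ∀ (y : Y) (i : Fin n) (c : Fin (n + 1)),
      t i • y ∈ D i → t i • y ∈ E c → c = i.succ := by
    intro y i c h1 h2
    rcases Fin.eq_zero_or_eq_succ c with rfl | ⟨c', rfl⟩
    · rw [hE0] at h2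
      exact absurd (Set.mem_iUnion.mpr ⟨i, h1⟩) h2
    · rw [hEs] at h2
      by_contra hc
      have hne : c' ≠ i := fun hcc => hc (by rw [hcc])
      exact Set.disjoint_left.mp (hDdisj c' i hne) h2 h1
  refine ⟨fun k => E' (finSumFinEquiv (Sum.inl k)).succ,
    fun k => E' (finSumFinEquiv (Sum.inr k)).succ,
    fun k => (g' (finSumFinEquiv (Sum.inl k)))⁻¹,
    fun k => (g' (finSumFinEquiv (Sum.inr k)))⁻¹, ?_, ?_, ?_, ?_, ?_⟩
  · intro i j hij
    refine hpart'.1 _ _ (fun hc => hij ?_)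
    exact Sum.inl_injective (finSumFinEquiv.injective (Fin.succ_injective _ hc))
  · intro i j hij
    refine hpart'.1 _ _ (fun hc => hij ?_)
    exact Sum.inr_injective (finSumFinEquiv.injective (Fin.succ_injective _ hc))
  · intro i j
    refine hpart'.1 _ _ (fun hc => ?_)
    have := finSumFinEquiv.injective (Fin.succ_injective _ hc)
    simp at this
  · -- coverage by translates of A'
    rw [Set.eq_univ_iff_forall]
    intro x
    obtain ⟨y, hy0, hyi⟩ := hCfgMem x
    have hyi' : ∀ i : Fin n, t i • y ∈ E (Cfg x i.succ) := by
      intro i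
      have := Set.mem_iInter.mp hyi i
      rwa [Set.mem_inv_smul_set_iff] at this
    have hycov : y ∈ ⋃ k, g k • A k := hgA ▸ Set.mem_univ y
    obtain ⟨k, hk⟩ := Set.mem_iUnion.mp hycov
    set i : Fin n := finSumFinEquiv (Sum.inl k) with hi
    have hti : t i = (g k)⁻¹ := by simp [ht, hi]
    have htiy : t i • y ∈ D i := by
      have : (g k)⁻¹ • y ∈ A k := by
        rwa [← Set.mem_smul_set_iff_inv_smul_mem]
      simp only [hD, hi, Equiv.symm_apply_apply, Sum.elim_inl]
      rwa [hti]
    have hcic : Cfg x i.succ = i.succ := hforce y i _ htiy (hyi' i)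
    have hgx : g' i • x ∈ E' i.succ := by
      rw [← hcic, hCfgs]
      exact hidx (g' i • x)
    refine Set.mem_iUnion.mpr ⟨k, ?_⟩
    rw [Set.mem_smul_set_iff_inv_smul_mem, inv_inv]
    exact hgx
  · -- coverage by translates of B'
    rw [Set.eq_univ_iff_forall]
    intro x
    obtain ⟨y, hy0, hyi⟩ := hCfgMem x
    have hyi' : ∀ i : Fin n, t i • y ∈ E (Cfg x i.succ) := by
      intro i
      have := Set.mem_iInter.mp hyi i
      rwa [Set.mem_inv_smul_set_iff] at this
    have hycov : y ∈ ⋃ k, h k • B k := hhB ▸ Set.mem_univ y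
    obtain ⟨k, hk⟩ := Set.mem_iUnion.mp hycov
    set i : Fin n := finSumFinEquiv (Sum.inr k) with hi
    have hti : t i = (h k)⁻¹ := by simp [ht, hi]
    have htiy : t i • y ∈ D i := by
      have : (h k)⁻¹ • y ∈ B k := by
        rwa [← Set.mem_smul_set_iff_inv_smul_mem]
      simp only [hD, hi, Equiv.symm_apply_apply, Sum.elim_inr]
      rwa [hti]
    have hcic : Cfg x i.succ = i.succ := hforce y i _ htiy (hyi' i)
    have hgx : g' i • x ∈ E' i.succ := by
      rw [← hcic, hCfgs]
      exact hidx (g' i • x)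
    refine Set.mem_iUnion.mpr ⟨k, ?_⟩
    rw [Set.mem_smul_set_iff_inv_smul_mem, inv_inv]
    exact hgx

/-- If `Con(H ↷ Y) ⊆ Con(G ↷ X)` then `τ(G ↷ X) ≤ τ(H ↷ Y)`. -/
theorem stmt12 {G X H Y : Type*} [Group G] [MulAction G X] [Group H] [MulAction H Y]
    (h : ConCollection H Y ⊆ ConCollection G X) :
    tarskiNumber G X ≤ tarskiNumber H Y := by
  apply sInf_le_sInf
  rintro k ⟨p, q, hpq, rfl⟩
  exact ⟨p, q, key_transfer h p q hpq, rfl⟩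
end

section
/- (Ping-pong lemma for several subgroups) Let G act on a set X, let H_1,...,H_k be subgroups of G with |H_i| > 2 for at least one i, and suppose there are pairwise disjoint nonempty subsets X_1,...,X_k of X such that for all i ≠ s and every nonidentity h ∈ H_i, h·X_s ⊆ X_i. Then the subgroup generated by H_1,...,H_k is isomorphic to the free product H_1 ∗ ··· ∗ H_k. -/
open scoped Pointwise ENNReal

private lemma neword_aux {ι : Type*} [Subsingleton ι] {H : ι → Type*} [∀ i, Group (H i)]
    {G : Type*} [Group G] (f : ∀ i, H i →* G) (hf : ∀ i, Function.Injective (f i))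
    {i j : ι} (w : Monoid.CoprodI.NeWord H i j) : Monoid.CoprodI.lift f w.prod ≠ 1 := by
  induction w with
  | singleton x hx =>
    simpa [Monoid.CoprodI.NeWord.prod_singleton] using
      fun h => hx ((injective_iff_map_eq_one _).mp (hf _) x h)
  | append w1 h w2 ih1 ih2 => exact absurd (Subsingleton.elim _ _) h

private lemma lift_inj_small {ι : Type*} [Subsingleton ι] {H : ι → Type*} [∀ i, Group (H i)]
    {G : Type*} [Group G] (f : ∀ i, H i →* G) (hf : ∀ i, Function.Injective (f i)) :
    Function.Injective (Monoid.CoprodI.lift f) := by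
  classical
  apply (injective_iff_map_eq_one _).mpr
  rw [(Monoid.CoprodI.Word.equiv).forall_congr_left]
  intro w Heq
  dsimp [Monoid.CoprodI.Word.equiv] at *
  by_cases hw : w = Monoid.CoprodI.Word.empty
  · rw [hw, Monoid.CoprodI.Word.prod_empty]
  · obtain ⟨i, j, w', rfl⟩ := Monoid.CoprodI.NeWord.of_word w hw
    exact absurd Heq (neword_aux f hf w')

/-- Ping-pong lemma for several subgroups: if `|H i| > 2` for some `i` and there are
pairwise disjoint nonempty subsets `S i` of `X` with `h • S s ⊆ S i` for every
nonidentity `h ∈ H i` and `s ≠ i`, then `⟨H 1, ..., H k⟩ ≅ H 1 ∗ ⋯ ∗ H k`, i.e.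
the canonical map from the free product to `G` is injective. -/
theorem stmt16 {G X : Type*} [Group G] [MulAction G X] {k : ℕ}
    (H : Fin k → Subgroup G) (hcard : ∃ i, 2 < Cardinal.mk (H i))
    (S : Fin k → Set X) (hne : ∀ i, (S i).Nonempty)
    (hdisj : ∀ i j, i ≠ j → Disjoint (S i) (S j))
    (hpp : ∀ i s, i ≠ s → ∀ h : H i, h ≠ 1 → (h : G) • S s ⊆ S i) :
    Function.Injective ⇑(Monoid.CoprodI.lift fun i => (H i).subtype) := by
  obtain ⟨i, hi⟩ := hcard
  rcases lt_or_ge k 2 with hk | hk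
  · haveI : Subsingleton (Fin k) := by
      interval_cases k <;> infer_instance
    exact lift_inj_small _ fun i => Subtype.coe_injective
  · haveI : Nontrivial (Fin k) := Fin.nontrivial_iff_two_le.mpr hk
    have h3 : (3 : Cardinal) ≤ Cardinal.mk (H i) := by
      have := (Cardinal.add_one_le_succ 2).trans (Order.succ_le_of_lt hi)
      have h23 : (2 : Cardinal) + 1 = 3 := by norm_num
      rwa [h23] at this
    exact Monoid.CoprodI.lift_injective_of_ping_pong _ (Or.inr ⟨i, h3⟩) S hne
      (fun a b hab => hdisj a b hab) (fun a b hab h hh => hpp a b hab h hh)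
end

section
/- An element a of a group G has infinite order if and only if there exist disjoint subsets E_1, E_2 of G such that aE_1 ⊆ E_1 and aE_2 ∩ E_1 ≠ ∅. -/
open scoped Pointwise ENNReal

/-- `a ∈ G` has infinite order iff there are disjoint sets `E₁, E₂ ⊆ G` with
`a • E₁ ⊆ E₁` and `a • E₂ ∩ E₁ ≠ ∅`. -/
theorem stmt18 {G : Type*} [Group G] (a : G) :
    ¬ IsOfFinOrder a ↔
      ∃ E₁ E₂ : Set G, Disjoint E₁ E₂ ∧ a • E₁ ⊆ E₁ ∧ (a • E₂ ∩ E₁).Nonempty := by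
  constructor
  · intro h
    refine ⟨{x | ∃ n : ℕ, 0 < n ∧ x = a ^ n}, {1}, ?_, ?_, ?_⟩
    · rw [Set.disjoint_left]
      rintro x ⟨n, hn, rfl⟩ hx
      simp only [Set.mem_singleton_iff] at hx
      exact h (isOfFinOrder_iff_pow_eq_one.mpr ⟨n, hn, hx⟩)
    · rintro x hx
      obtain ⟨y, ⟨n, hn, rfl⟩, rfl⟩ := hx
      exact ⟨n + 1, n.succ_pos, by show a * a ^ n = a ^ (n + 1); rw [pow_succ']⟩
    · exact ⟨a, ⟨1, Set.mem_singleton 1, by simp⟩, ⟨1, one_pos, (pow_one a).symm⟩⟩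
  · rintro ⟨E₁, E₂, hdisj, hsub, x, hx⟩
    intro hfin
    obtain ⟨n, hn, han⟩ := isOfFinOrder_iff_pow_eq_one.mp hfin
    have hx1 := hx.1
    obtain ⟨y, hy, rfl⟩ := hx1
    have key : ∀ k : ℕ, a ^ k • (a • y) ∈ E₁ := by
      intro k
      induction k with
      | zero => simpa using hx.2
      | succ k ih =>
        have := hsub (Set.smul_mem_smul_set ih)
        rwa [smul_smul, ← pow_succ'] at this
    have hkey := key (n - 1)
    rw [smul_smul, ← pow_succ, Nat.sub_add_cancel hn, han, one_smul] at hkey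
    exact (Set.disjoint_left.mp hdisj hkey) hy
end

section
/- Let a group G act on a set X and suppose there are subsets X_1,...,X_n of X and elements h_1,...,h_n ∈ G such that h_i·X_i ⊆ X_{i+1} (indices mod n, X_{n+1} = X_1) and X = ⋃_{i=1}^n (X_{i+1} \ h_i·X_i). Then the action G ↷ X is paradoxical and τ(G ↷ X) ≤ n + 2. -/
open scoped Pointwise ENNReal

section Aux

variable {G X : Type*} [Group G] [MulAction G X] {n : ℕ} [NeZero n]

open Fin.NatCast

private def pp (h : Fin n → G) : ℕ → G
  | 0 => 1
  | (t+1) => h (t : Fin n) * pp h t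

private def FF (S : Fin n → Set X) (h : Fin n → G) (i : Fin n) : Set X :=
  S (i + 1) \ h i • S i

private def DD (S : Fin n → Set X) (h : Fin n → G) (i : Fin n) : Set X :=
  FF S h i \ ⋃ j, ⋃ (_ : j < i), FF S h j

private lemma disj_smul (g : G) {A B : Set X} (hd : Disjoint A B) :
    Disjoint (g • A) (g • B) := by
  rw [Set.disjoint_iff_inter_eq_empty] at hd ⊢
  rw [← Set.smul_set_inter, hd, Set.smul_set_empty]

private lemma DD_subset (S : Fin n → Set X) (h : Fin n → G) (i : Fin n) :
    DD S h i ⊆ FF S h i := Set.diff_subset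

private lemma DD_disjoint (S : Fin n → Set X) (h : Fin n → G) {i j : Fin n}
    (hij : i ≠ j) : Disjoint (DD S h i) (DD S h j) := by
  wlog hlt : i < j generalizing i j
  · exact (this hij.symm ((hij.lt_or_gt).resolve_left hlt)).symm
  refine Set.disjoint_left.2 fun x hxi hxj => ?_
  exact hxj.2 (Set.mem_biUnion hlt hxi.1)

private lemma DD_iUnion (S : Fin n → Set X) (h : Fin n → G)
    (hcover : (⋃ i, FF S h i) = Set.univ) : (⋃ i, DD S h i) = Set.univ := by
  refine Set.eq_univ_of_forall fun x => ?_
  have hx : x ∈ ⋃ i, FF S h i := hcover ▸ Set.mem_univ x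
  obtain ⟨i, hi⟩ := Set.mem_iUnion.1 hx
  clear hx
  induction i using WellFoundedLT.induction with
  | ind i IH =>
    by_cases hD : x ∈ ⋃ j, ⋃ (_ : j < i), FF S h j
    · obtain ⟨j, hj, hxj⟩ := Set.mem_iUnion₂.1 hD
      exact IH j hj hxj
    · exact Set.mem_iUnion.2 ⟨i, hi, hD⟩

private lemma DD_disj_base (S : Fin n → Set X) (h : Fin n → G) (i : Fin n) :
    Disjoint (DD S h i) (h i • S i) :=
  Set.disjoint_left.2 fun _ hx hx' => hx.1.2 hx'

private lemma invariant (S : Fin n → Set X) (h : Fin n → G)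
    (hsub : ∀ i, h i • S i ⊆ S (i + 1)) :
    ∀ t, t ≤ n →
      (pp h t • S 0 ⊆ S (t : Fin n)) ∧
      (∀ j, j < t → (pp h t * (pp h (j+1))⁻¹) • DD S h (j : Fin n) ⊆ S (t : Fin n)) ∧
      (∀ j, j < t → Disjoint ((pp h t * (pp h (j+1))⁻¹) • DD S h (j : Fin n))
          (pp h t • S 0)) ∧
      (∀ j j', j < t → j' < t → j ≠ j' →
        Disjoint ((pp h t * (pp h (j+1))⁻¹) • DD S h (j : Fin n))
          ((pp h t * (pp h (j'+1))⁻¹) • DD S h (j' : Fin n))) := by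
  intro t
  induction t with
  | zero =>
    intro _
    refine ⟨?_, fun j hj => absurd hj (Nat.not_lt_zero j), fun j hj => absurd hj (Nat.not_lt_zero j),
      fun j j' hj _ _ => absurd hj (Nat.not_lt_zero j)⟩
    simp [pp]
  | succ t IH =>
    intro ht
    obtain ⟨IH1, IH2, IH3, IH4⟩ := IH (le_of_lt ht)
    have hc : ((t+1 : ℕ) : Fin n) = (t : Fin n) + 1 := by push_cast; ring
    have hpp : pp h (t+1) = h (t : Fin n) * pp h t := rfl
    -- the "old" pieces, translated by h t, land in S (t+1)
    have hsub1 : pp h (t+1) • S 0 ⊆ S ((t+1 : ℕ) : Fin n) := by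
      rw [hc, hpp, mul_smul]
      exact (Set.smul_set_mono IH1).trans (hsub _)
    have hmul : ∀ j, j < t →
        pp h (t+1) * (pp h (j+1))⁻¹ = h (t : Fin n) * (pp h t * (pp h (j+1))⁻¹) := by
      intro j _; rw [hpp, mul_assoc]
    have hDt : (pp h (t+1) * (pp h (t+1))⁻¹) • DD S h ((t : ℕ) : Fin n)
        = DD S h ((t : ℕ) : Fin n) := by
      rw [mul_inv_cancel, one_smul]
    have e0 : pp h (t+1) • S 0 = h (t : Fin n) • (pp h t • S 0) := by
      rw [hpp]; exact mul_smul _ _ _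
    have e : ∀ j, j < t → (pp h (t+1) * (pp h (j+1))⁻¹) • DD S h ((j:ℕ) : Fin n)
        = h (t : Fin n) • ((pp h t * (pp h (j+1))⁻¹) • DD S h ((j:ℕ) : Fin n)) := by
      intro j hj; rw [hmul j hj]; exact mul_smul _ _ _
    refine ⟨hsub1, ?_, ?_, ?_⟩
    · intro j hj
      rcases Nat.lt_succ_iff_lt_or_eq.1 hj with hj | rfl
      · rw [e j hj, hc]
        exact (Set.smul_set_mono (IH2 j hj)).trans (hsub _)
      · rw [hDt, hc]
        exact (DD_subset S h _).trans Set.diff_subset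
    · intro j hj
      rcases Nat.lt_succ_iff_lt_or_eq.1 hj with hj | rfl
      · rw [e j hj, e0]
        exact disj_smul _ (IH3 j hj)
      · rw [hDt, e0]
        exact (DD_disj_base S h _).mono_right (Set.smul_set_mono IH1)
    · intro j j' hj hj' hne
      rcases Nat.lt_succ_iff_lt_or_eq.1 hj with hj | rfl <;>
        rcases Nat.lt_succ_iff_lt_or_eq.1 hj' with hj' | rfl
      · rw [e j hj, e j' hj']
        exact disj_smul _ (IH4 j j' hj hj' hne)
      · rw [e j hj, hDt]
        exact ((DD_disj_base S h _).mono_right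
          (Set.smul_set_mono (IH2 j hj))).symm
      · rw [e j' hj', hDt]
        exact (DD_disj_base S h _).mono_right (Set.smul_set_mono (IH2 j' hj'))
      · exact absurd rfl hne

end Aux

/-- A ping-pong criterion for paradoxicality: if `h i • S i ⊆ S (i + 1)` cyclically and
`X = ⋃ i (S (i+1) \ h i • S i)`, then the action is paradoxical with `τ(G ↷ X) ≤ n + 2`. -/
theorem stmt19 {G X : Type*} [Group G] [MulAction G X] {n : ℕ} [NeZero n]
    (S : Fin n → Set X) (h : Fin n → G)
    (hsub : ∀ i, h i • S i ⊆ S (i + 1))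
    (hcover : (⋃ i, (S (i + 1) \ h i • S i)) = Set.univ) :
    IsParadoxical G X ∧ tarskiNumber G X ≤ (n : ℕ∞) + 2 := by
  obtain ⟨inv1, inv2, inv3, inv4⟩ := invariant S h hsub n le_rfl
  open Fin.NatCast in have hn0 : ((n : ℕ) : Fin n) = 0 := Fin.natCast_self n
  open Fin.NatCast in have hcast : ∀ j : Fin n, ((j.val : ℕ) : Fin n) = j := Fin.cast_val_eq_self
  set A : Fin 2 → Set X := ![pp h n • S 0, (S 0)ᶜ] with hA
  set g' : Fin 2 → G := ![(pp h n)⁻¹, 1] with hg'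
  set B : Fin n → Set X := fun j => (pp h n * (pp h (j.val+1))⁻¹) • DD S h j with hBdef
  set hB : Fin n → G := fun j => (pp h n * (pp h (j.val+1))⁻¹)⁻¹ with hhB
  have hA0 : A 0 ⊆ S 0 := by
    rw [hn0] at inv1; simpa [hA] using inv1
  have hBj : ∀ j : Fin n, B j ⊆ S 0 := by
    intro j
    have := inv2 j.val j.isLt
    rw [hn0, hcast j] at this
    simpa [hBdef] using this
  have hABdisj : ∀ (i : Fin 2) (j : Fin n), Disjoint (A i) (B j) := by
    intro i j
    fin_cases i
    · have := inv3 j.val j.isLt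
      rw [hcast j] at this
      simpa [hA, hBdef] using this.symm
    · simpa [hA] using (disjoint_compl_left).mono_right (hBj j)
  have hpar : IsParadoxicalWith G X 2 n := by
    refine ⟨A, B, g', hB, ?_, ?_, hABdisj, ?_, ?_⟩
    · intro i j hij
      fin_cases i <;> fin_cases j <;> simp_all
      · exact (disjoint_compl_right).mono_left inv1
      · exact ((disjoint_compl_right).mono_left inv1).symm
    · intro i j hij
      have hv : i.val ≠ j.val := fun e => hij (Fin.val_injective e)
      have := inv4 i.val j.val i.isLt j.isLt hv
      rw [hcast i, hcast j] at this
      simpa [hBdef] using this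
    · refine Set.eq_univ_of_forall fun x => Set.mem_iUnion.2 ?_
      by_cases hx : x ∈ S 0
      · exact ⟨0, by simpa [hg', hA, inv_smul_smul] using hx⟩
      · exact ⟨1, by simpa [hg', hA] using hx⟩
    · have : ∀ j : Fin n, hB j • B j = DD S h j := by
        intro j
        show (pp h n * (pp h (j.val+1))⁻¹)⁻¹ • ((pp h n * (pp h (j.val+1))⁻¹) • DD S h j)
            = DD S h j
        exact inv_smul_smul _ _
      rw [Set.iUnion_congr this]
      exact DD_iUnion S h hcover
  refine ⟨⟨2, n, hpar⟩, ?_⟩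
  apply sInf_le
  exact ⟨2, n, hpar, by push_cast; ring⟩
end
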